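/- arXiv:0811.3782 — 11 statements merged into one kernel-verified Lean document; each statement's English description precedes it below -/
import Mathlib

section
/- Let A, B, C be topological spaces, let f : A → B and g : B → C be functions, and let d, k be natural numbers. If f is d-continuous and g is k-continuous, then the composition g ∘ f : A → C is (d·k)-continuous. -/
/-- **Composition of piecewise-continuous functions.**
If `f : A → B` is `d`-continuous and `g : B → C` is `k`-continuous,
then `g ∘ f` is `(d·k)`-continuous. -/
theorem composition_of_finitely_continuous
    {A B C : Type*} [TopologicalSpace A] [TopologicalSpace B] [TopologicalSpace C]
    (f : A → B) (g : B → C) (d k : ℕ)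
    (hf : ∃ D : Fin d → Set A, (⋃ i, D i) = Set.univ ∧ ∀ i, ContinuousOn f (D i))
    (hg : ∃ E : Fin k → Set B, (⋃ i, E i) = Set.univ ∧ ∀ i, ContinuousOn g (E i)) :
    ∃ F : Fin (d * k) → Set A, (⋃ i, F i) = Set.univ ∧ ∀ i, ContinuousOn (g ∘ f) (F i) := by
  obtain ⟨D, hDcov, hDc⟩ := hf
  obtain ⟨E, hEcov, hEc⟩ := hg
  refine ⟨fun n => D (finProdFinEquiv.symm n).1 ∩ f ⁻¹' E (finProdFinEquiv.symm n).2, ?_, ?_⟩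
  · apply Set.eq_univ_of_forall
    intro a
    have ha : a ∈ ⋃ i, D i := hDcov ▸ Set.mem_univ a
    have hfa : f a ∈ ⋃ j, E j := hEcov ▸ Set.mem_univ (f a)
    obtain ⟨i, hi⟩ := Set.mem_iUnion.1 ha
    obtain ⟨j, hj⟩ := Set.mem_iUnion.1 hfa
    refine Set.mem_iUnion.2 ⟨finProdFinEquiv (i, j), ?_⟩
    simp [hi, hj]
  · intro n
    exact (hEc _).comp ((hDc _).mono Set.inter_subset_left)
      fun a ha => ha.2
end

section
/- Let X and Y be topological spaces and f : X → Y a function. Define LEV'(f,0) = X and, inductively, LEV'(f,i+1) to be the set of points x ∈ LEV'(f,i) at which the restriction of f to LEV'(f,i) (with the subspace topology) is not continuous. If LEV'(f,k) = ∅ for some natural number k, then f is k-continuous. -/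
/-- The levels of discontinuity `LEV'(f, i)`:
`LEV'(f,0) = X`, and `LEV'(f,i+1)` is the set of points of `LEV'(f,i)` at which
the restriction of `f` to `LEV'(f,i)` (with the subspace topology) is discontinuous. -/
def LEV' {X Y : Type*} [TopologicalSpace X] [TopologicalSpace Y] (f : X → Y) : ℕ → Set X
  | 0 => Set.univ
  | (i + 1) => {x ∈ LEV' f i | ¬ ContinuousWithinAt f (LEV' f i) x}

/-- If the `k`-th level of discontinuity of `f` is empty, then `f` is `k`-continuous. -/
theorem k_continuous_of_level_k_empty
    {X Y : Type*} [TopologicalSpace X] [TopologicalSpace Y] (f : X → Y)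
    (k : ℕ) (hk : LEV' f k = ∅) :
    ∃ D : Fin k → Set X, (⋃ i, D i) = Set.univ ∧ ∀ i, ContinuousOn f (D i) := by
  refine ⟨fun i => LEV' f i \ LEV' f (i + 1), ?_, ?_⟩
  · ext x
    simp only [Set.mem_iUnion, Set.mem_univ, iff_true]
    have hP : x ∉ LEV' f k := by rw [hk]; exact Set.notMem_empty x
    have hex : ∃ n, x ∉ LEV' f n := ⟨k, hP⟩
    classical
    let n := Nat.find hex
    have hn : x ∉ LEV' f n := Nat.find_spec hex
    have hn0 : n ≠ 0 := by
      intro h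
      apply hn
      rw [h]; exact Set.mem_univ x
    obtain ⟨m, hm⟩ := Nat.exists_eq_succ_of_ne_zero hn0
    have hmk : m < k := by
      have : n ≤ k := Nat.find_le hP
      omega
    refine ⟨⟨m, hmk⟩, ?_, ?_⟩
    · have : m < n := by omega
      have := Nat.find_min hex this
      simpa using this
    · rw [hm] at hn; exact hn
  · intro i x hx
    have hxc : ContinuousWithinAt f (LEV' f i) x := by
      by_contra h
      exact hx.2 ⟨hx.1, h⟩
    exact hxc.mono (Set.diff_subset)
end

section
/- There exists a function f : [0,1] → [0,1] such that: (i) the range of f is contained in {0} ∪ {1/k : k ∈ ℕ, k ≥ 1}; (ii) for every open set V ⊆ ℝ, the preimage f⁻¹(V) is both a countable union of closed subsets of [0,1] and a countable intersection of open subsets of [0,1] (i.e. f is Δ₂-measurable); and (iii) for every natural number d, f is not d-continuous. -/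
open Set

noncomputable section

namespace Delta2Aux

/-! ### Basic point construction -/

def pw (i : ℕ) : ℝ := (4:ℝ)⁻¹ ^ (i+1)

lemma pw_pos (i : ℕ) : 0 < pw i := pow_pos (by norm_num) _

lemma pw_nonneg (i : ℕ) : 0 ≤ pw i := (pw_pos i).le

lemma pw_anti {m n : ℕ} (h : m ≤ n) : pw n ≤ pw m :=
  pow_le_pow_of_le_one (by norm_num) (by norm_num) (by omega)

def pt (F : Finset ℕ) : ℝ := ∑ i ∈ F, pw i

lemma pt_nonneg (F : Finset ℕ) : 0 ≤ pt F :=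
  Finset.sum_nonneg fun i _ => pw_nonneg i

lemma sum_pw_Ico {d N : ℕ} (h : d ≤ N) :
    ∑ i ∈ Finset.Ico d N, pw i = ((4:ℝ)⁻¹^d - (4:ℝ)⁻¹^N)/3 := by
  induction N, h using Nat.le_induction with
  | base => simp
  | succ N hdN ih =>
      rw [Finset.sum_Ico_succ_top hdN, ih]
      show _ = ((4:ℝ)⁻¹^d - (4:ℝ)⁻¹^(N+1))/3
      rw [pow_succ]
      unfold pw
      rw [pow_succ]
      ring

lemma pt_le {d : ℕ} {F : Finset ℕ} (h : ∀ i ∈ F, d ≤ i) :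
    pt F ≤ (4:ℝ)⁻¹^d / 3 := by
  rcases F.eq_empty_or_nonempty with rfl | hne
  · simp only [pt, Finset.sum_empty]
    positivity
  · set N := F.max' hne + 1 with hN
    have hsub : F ⊆ Finset.Ico d N := by
      intro i hi
      exact Finset.mem_Ico.2 ⟨h i hi, by
        have := F.le_max' i hi; omega⟩
    have hdN : d ≤ N := by
      have := h _ (F.max'_mem hne); omega
    have h1 : pt F ≤ ∑ i ∈ Finset.Ico d N, pw i :=
      Finset.sum_le_sum_of_subset_of_nonneg hsub (fun i _ _ => pw_nonneg i)
    rw [sum_pw_Ico hdN] at h1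
    have h2 : (0:ℝ) ≤ (4:ℝ)⁻¹^N := by positivity
    linarith

lemma pw_le_pt {m : ℕ} {F : Finset ℕ} (h : m ∈ F) : pw m ≤ pt F :=
  Finset.single_le_sum (fun i _ => pw_nonneg i) h

lemma pt_lt_pt {m : ℕ} {F G : Finset ℕ} (hm : m ∈ F) (hG : ∀ i ∈ G, m + 1 ≤ i) :
    pt G < pt F := by
  have h1 : pt G ≤ (4:ℝ)⁻¹^(m+1)/3 := pt_le hG
  have h2 : pw m ≤ pt F := pw_le_pt hm
  have h3 : (0:ℝ) < (4:ℝ)⁻¹^(m+1) := by positivity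
  have h4 : pw m = (4:ℝ)⁻¹^(m+1) := rfl
  linarith

lemma pt_inj : ∀ F G : Finset ℕ, pt F = pt G → F = G := by
  intro F
  induction F using Finset.strongInductionOn with
  | _ F ih =>
    intro G h
    rcases F.eq_empty_or_nonempty with rfl | hF
    · rcases G.eq_empty_or_nonempty with rfl | hG
      · rfl
      · exfalso
        have h1 : pw (G.min' hG) ≤ pt G := pw_le_pt (G.min'_mem hG)
        have h2 : pt (∅ : Finset ℕ) = 0 := by simp [pt]
        have h3 := pw_pos (G.min' hG)
        rw [h2] at h
        linarith
    · rcases G.eq_empty_or_nonempty with rfl | hG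
      · exfalso
        have h1 : pw (F.min' hF) ≤ pt F := pw_le_pt (F.min'_mem hF)
        have h2 : pt (∅ : Finset ℕ) = 0 := by simp [pt]
        have h3 := pw_pos (F.min' hF)
        rw [h2] at h
        linarith
      · set m := F.min' hF with hm
        set n := G.min' hG with hn
        have hmn : m = n := by
          rcases lt_trichotomy m n with hlt | heq | hlt
          · exfalso
            have : pt G < pt F := pt_lt_pt (F.min'_mem hF)
              (fun i hi => by have := G.min'_le i hi; omega)
            linarith
          · exact heq
          · exfalso
            have : pt F < pt G := pt_lt_pt (G.min'_mem hG)
              (fun i hi => by have := F.min'_le i hi; omega)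
            linarith
        have hFe : pw m + pt (F.erase m) = pt F :=
          Finset.add_sum_erase _ pw (F.min'_mem hF)
        have hGe : pw m + pt (G.erase m) = pt G := by
          rw [hmn]
          exact Finset.add_sum_erase _ pw (G.min'_mem hG)
        have hee : pt (F.erase m) = pt (G.erase m) := by linarith
        have heq := ih (F.erase m) (Finset.erase_ssubset (F.min'_mem hF)) (G.erase m) hee
        calc F = insert m (F.erase m) := (Finset.insert_erase (F.min'_mem hF)).symm
          _ = insert m (G.erase m) := by rw [heq]
          _ = G := by rw [hmn]; exact Finset.insert_erase (G.min'_mem hG)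

/-! ### The function -/

def Good (m : ℕ) (F : Finset ℕ) : Prop :=
  m ∈ F ∧ (∀ i ∈ F, m ≤ i) ∧ F.card ≤ m + 1

def lev (m : ℕ) (F : Finset ℕ) : ℕ := m + 2 - F.card

lemma Good.card_pos {m : ℕ} {F : Finset ℕ} (h : Good m F) : 1 ≤ F.card :=
  Finset.card_pos.2 ⟨m, h.1⟩

lemma lev_pos {m : ℕ} {F : Finset ℕ} (h : Good m F) : 1 ≤ lev m F := by
  have := h.2.2; unfold lev; omega

lemma card_add_lev {m : ℕ} {F : Finset ℕ} (h : Good m F) :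
    F.card + lev m F = m + 2 := by
  have := h.2.2; unfold lev; omega

lemma min_unique {m m' : ℕ} {F : Finset ℕ} (h1 : m ∈ F) (h2 : ∀ i ∈ F, m ≤ i)
    (h1' : m' ∈ F) (h2' : ∀ i ∈ F, m' ≤ i) : m = m' :=
  le_antisymm (h2 m' h1') (h2' m h1)

open Classical in
def g (x : ℝ) : ℝ :=
  if h : ∃ p : ℕ × Finset ℕ, Good p.1 p.2 ∧ pt p.2 = x then
    ((lev h.choose.1 h.choose.2 : ℕ) : ℝ)⁻¹
  else 0

lemma g_eval {m : ℕ} {F : Finset ℕ} (h : Good m F) :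
    g (pt F) = ((lev m F : ℕ) : ℝ)⁻¹ := by
  have hex : ∃ p : ℕ × Finset ℕ, Good p.1 p.2 ∧ pt p.2 = pt F := ⟨⟨m, F⟩, h, rfl⟩
  simp only [g]
  rw [dif_pos hex]
  obtain ⟨hg', hpt'⟩ := hex.choose_spec
  have hFF : hex.choose.2 = F := pt_inj _ _ hpt'
  have hmm : hex.choose.1 = m := by
    rw [hFF] at hg'
    exact min_unique hg'.1 hg'.2.1 h.1 h.2.1
  rw [hFF, hmm]

lemma g_zero {x : ℝ} (h : ¬ ∃ m F, Good m F ∧ pt F = x) : g x = 0 := by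
  have h' : ¬ ∃ p : ℕ × Finset ℕ, Good p.1 p.2 ∧ pt p.2 = x := by
    rintro ⟨⟨m, F⟩, h1, h2⟩
    exact h ⟨m, F, h1, h2⟩
  simp only [g]
  rw [dif_neg h']

lemma g_cases (x : ℝ) : g x = 0 ∨ ∃ k : ℕ, 1 ≤ k ∧ g x = ((k : ℕ) : ℝ)⁻¹ := by
  by_cases h : ∃ p : ℕ × Finset ℕ, Good p.1 p.2 ∧ pt p.2 = x
  · right
    refine ⟨lev h.choose.1 h.choose.2, lev_pos h.choose_spec.1, ?_⟩
    simp only [g]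
    rw [dif_pos h]
  · left
    simp only [g]
    rw [dif_neg h]

lemma g_mem_Icc (x : ℝ) : g x ∈ Set.Icc (0:ℝ) 1 := by
  rcases g_cases x with h | ⟨k, hk, h⟩
  · rw [h]; exact ⟨le_refl 0, zero_le_one⟩
  · rw [h]
    constructor
    · positivity
    · exact inv_le_one_of_one_le₀ (by exact_mod_cast hk)

/-! ### Closedness machinery -/

lemma closed_union_aux (A : ℕ → Set ℝ) (hcl : ∀ e, IsClosed (A e))
    (hb : ∀ e, A e ⊆ Icc 0 ((4:ℝ)⁻¹ ^ e)) : IsClosed ({0} ∪ ⋃ e, A e) := by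
  set S : Set ℝ := {0} ∪ ⋃ e, A e with hS
  have hclN : ∀ N : ℕ, IsClosed ((({0} : Set ℝ) ∪ ⋃ e ∈ Finset.range N, A e)
      ∪ Icc 0 ((4:ℝ)⁻¹ ^ N)) := by
    intro N
    refine IsClosed.union (IsClosed.union isClosed_singleton ?_) isClosed_Icc
    exact (Finset.range N).finite_toSet.isClosed_biUnion (fun e _ => hcl e)
  have hsub : ∀ N : ℕ, S ⊆ ((({0} : Set ℝ) ∪ ⋃ e ∈ Finset.range N, A e)
      ∪ Icc 0 ((4:ℝ)⁻¹ ^ N)) := by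
    intro N x hx
    rcases hx with hx | hx
    · exact Or.inl (Or.inl hx)
    · rcases mem_iUnion.1 hx with ⟨e, he⟩
      by_cases hEN : e < N
      · exact Or.inl (Or.inr (mem_biUnion (Finset.mem_range.2 hEN) he))
      · refine Or.inr ⟨(hb e he).1, le_trans (hb e he).2 ?_⟩
        exact pow_le_pow_of_le_one (by norm_num) (by norm_num) (by omega)
  apply isClosed_of_closure_subset
  intro x hx
  by_cases hxS : x ∈ S
  · exact hxS
  · exfalso
    have hxN : ∀ N : ℕ, x ∈ Icc 0 ((4:ℝ)⁻¹ ^ N) := by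
      intro N
      have h1 : x ∈ ((({0} : Set ℝ) ∪ ⋃ e ∈ Finset.range N, A e)
          ∪ Icc 0 ((4:ℝ)⁻¹ ^ N)) :=
        (hclN N).closure_subset (closure_mono (hsub N) hx)
      rcases h1 with h1 | h1
      · exfalso
        apply hxS
        rcases h1 with h1 | h1
        · exact Or.inl h1
        · rcases mem_iUnion₂.1 h1 with ⟨e, _, he⟩
          exact Or.inr (mem_iUnion.2 ⟨e, he⟩)
      · exact h1
    have ht : Filter.Tendsto (fun N : ℕ => (4:ℝ)⁻¹ ^ N) Filter.atTop (nhds 0) :=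
      tendsto_pow_atTop_nhds_zero_of_lt_one (by norm_num) (by norm_num)
    have hle : x ≤ 0 := ge_of_tendsto' ht (fun N => (hxN N).2)
    have hge : 0 ≤ x := (hxN 0).1
    have : x = 0 := le_antisymm hle hge
    exact hxS (Or.inl this)

def R (d j : ℕ) : Set ℝ := pt '' {F | (∀ i ∈ F, d ≤ i) ∧ F.card ≤ j}

lemma R_zero (d : ℕ) : R d 0 = {0} := by
  ext x
  constructor
  · rintro ⟨F, ⟨_, hc⟩, rfl⟩
    have : F = ∅ := Finset.card_eq_zero.1 (by omega)
    subst this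
    simp [pt]
  · rintro rfl
    exact ⟨∅, ⟨by simp, by simp⟩, by simp [pt]⟩

lemma R_subset (d j : ℕ) : R d j ⊆ Icc 0 ((4:ℝ)⁻¹^d / 3) := by
  rintro x ⟨F, ⟨hlb, _⟩, rfl⟩
  exact ⟨pt_nonneg F, pt_le hlb⟩

lemma R_succ (d j : ℕ) :
    R d (j+1) = {0} ∪ ⋃ e, ⋃ (_ : d ≤ e), (fun y => pw e + y) '' R (e+1) j := by
  ext x
  constructor
  · rintro ⟨F, ⟨hlb, hcard⟩, rfl⟩
    rcases F.eq_empty_or_nonempty with rfl | hne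
    · left; simp [pt]
    · right
      set e := F.min' hne with he
      have hme : e ∈ F := F.min'_mem hne
      refine mem_iUnion.2 ⟨e, mem_iUnion.2 ⟨hlb e hme, ?_⟩⟩
      refine ⟨pt (F.erase e), ⟨F.erase e, ⟨?_, ?_⟩, rfl⟩, ?_⟩
      · intro i hi
        rcases Finset.mem_erase.1 hi with ⟨hne', hiF⟩
        have := F.min'_le i hiF
        omega
      · have h1 : 1 ≤ F.card := Finset.card_pos.2 hne
        rw [Finset.card_erase_of_mem hme]
        omega
      · exact Finset.add_sum_erase _ pw hme
  · rintro (hx | hx)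
    · rw [mem_singleton_iff] at hx
      subst hx
      exact ⟨∅, ⟨by simp, by simp⟩, by simp [pt]⟩
    · rcases mem_iUnion.1 hx with ⟨e, he⟩
      rcases mem_iUnion.1 he with ⟨hde, hy⟩
      rcases hy with ⟨y, ⟨F', ⟨hlb', hcard'⟩, rfl⟩, rfl⟩
      have hnm : e ∉ F' := fun h => by have := hlb' e h; omega
      refine ⟨insert e F', ⟨?_, ?_⟩, ?_⟩
      · intro i hi
        rcases Finset.mem_insert.1 hi with rfl | hi
        · exact hde
        · have := hlb' i hi; omega
      · rw [Finset.card_insert_of_notMem hnm]; omega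
      · show pt _ = pw e + pt F'
        unfold pt
        rw [Finset.sum_insert hnm]

lemma R_closed (j : ℕ) : ∀ d, IsClosed (R d j) := by
  induction j with
  | zero => intro d; rw [R_zero]; exact isClosed_singleton
  | succ j ih =>
    intro d
    rw [R_succ]
    apply closed_union_aux
    · intro e
      by_cases hde : d ≤ e
      · rw [Set.iUnion_eq_if, if_pos hde]
        have : (fun y => pw e + y) '' R (e+1) j
            = (Homeomorph.addLeft (pw e)) '' R (e+1) j := rfl
        rw [this]
        exact (Homeomorph.addLeft (pw e)).isClosedMap _ (ih (e+1))
      · rw [Set.iUnion_eq_if, if_neg hde]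
        exact isClosed_empty
    · intro e
      by_cases hde : d ≤ e
      · rw [Set.iUnion_eq_if, if_pos hde]
        rintro x ⟨y, hy, rfl⟩
        have h1 := R_subset (e+1) j hy
        have h2 : pw e = (4:ℝ)⁻¹^(e+1) := rfl
        have h3 : (4:ℝ)⁻¹^(e+1) = (4:ℝ)⁻¹^e * 4⁻¹ := pow_succ _ _
        have h4 : (0:ℝ) ≤ (4:ℝ)⁻¹^e := by positivity
        constructor
        · have := h1.1; have := pw_nonneg e; simp only [mem_setOf_eq] at *; linarith
        · have := h1.2
          simp only [mem_setOf_eq] at *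
          rw [h3] at h2
          have h5 : y ≤ (4:ℝ)⁻¹^(e+1)/3 := this
          rw [h3] at h5
          linarith
      · rw [Set.iUnion_eq_if, if_neg hde]
        exact empty_subset _

def Tg (m j : ℕ) : Set ℝ := pt '' {F | m ∈ F ∧ (∀ i ∈ F, m ≤ i) ∧ F.card ≤ j}

lemma Tg_zero (m : ℕ) : Tg m 0 = ∅ := by
  ext x
  simp only [Tg, mem_image, mem_setOf_eq, mem_empty_iff_false, iff_false]
  rintro ⟨F, ⟨hmF, _, hc⟩, _⟩
  have := Finset.card_pos.2 ⟨m, hmF⟩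
  omega

lemma Tg_succ (m j : ℕ) : Tg m (j+1) = (fun y => pw m + y) '' R (m+1) j := by
  ext x
  constructor
  · rintro ⟨F, ⟨hmF, hlb, hcard⟩, rfl⟩
    refine ⟨pt (F.erase m), ⟨F.erase m, ⟨?_, ?_⟩, rfl⟩, ?_⟩
    · intro i hi
      rcases Finset.mem_erase.1 hi with ⟨hne', hiF⟩
      have := hlb i hiF
      omega
    · have h1 : 1 ≤ F.card := Finset.card_pos.2 ⟨m, hmF⟩
      rw [Finset.card_erase_of_mem hmF]
      omega
    · exact Finset.add_sum_erase _ pw hmF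
  · rintro ⟨y, ⟨F', ⟨hlb', hcard'⟩, rfl⟩, rfl⟩
    have hnm : m ∉ F' := fun h => by have := hlb' m h; omega
    refine ⟨insert m F', ⟨Finset.mem_insert_self _ _, ?_, ?_⟩, ?_⟩
    · intro i hi
      rcases Finset.mem_insert.1 hi with rfl | hi
      · exact le_refl _
      · have := hlb' i hi; omega
    · rw [Finset.card_insert_of_notMem hnm]; omega
    · show pt _ = pw m + pt F'
      unfold pt
      rw [Finset.sum_insert hnm]

lemma Tg_closed (m j : ℕ) : IsClosed (Tg m j) := by
  cases j with
  | zero => rw [Tg_zero]; exact isClosed_empty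
  | succ j =>
    rw [Tg_succ]
    have : (fun y => pw m + y) '' R (m+1) j
        = (Homeomorph.addLeft (pw m)) '' R (m+1) j := rfl
    rw [this]
    exact (Homeomorph.addLeft (pw m)).isClosedMap _ (R_closed j (m+1))

lemma Tg_subset (m j : ℕ) : Tg m j ⊆ Icc (pw m) ((4:ℝ)⁻¹^m / 3) := by
  rintro x ⟨F, ⟨hmF, hlb, _⟩, rfl⟩
  exact ⟨pw_le_pt hmF, pt_le hlb⟩

/-! ### Level sets -/

def LvSet (m k : ℕ) : Set ℝ :=
  pt '' {F | m ∈ F ∧ (∀ i ∈ F, m ≤ i) ∧ F.card + k = m + 2}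

lemma LvSet_eq {m k : ℕ} (hk : 1 ≤ k) :
    LvSet m k = Tg m (m + 2 - k) \ Tg m (m + 1 - k) := by
  ext x
  constructor
  · rintro ⟨F, ⟨hmF, hlb, hck⟩, rfl⟩
    have hc1 : 1 ≤ F.card := Finset.card_pos.2 ⟨m, hmF⟩
    refine ⟨⟨F, ⟨hmF, hlb, by omega⟩, rfl⟩, ?_⟩
    rintro ⟨F', ⟨hmF', hlb', hc'⟩, hpt'⟩
    have hFF : F' = F := pt_inj _ _ hpt'
    subst hFF
    omega
  · rintro ⟨⟨F, ⟨hmF, hlb, hc⟩, rfl⟩, hnot⟩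
    have hc1 : 1 ≤ F.card := Finset.card_pos.2 ⟨m, hmF⟩
    have hge : ¬ (F.card ≤ m + 1 - k) := fun h => hnot ⟨F, ⟨hmF, hlb, h⟩, rfl⟩
    exact ⟨F, ⟨hmF, hlb, by omega⟩, rfl⟩

def O (m : ℕ) : Set ℝ := Ioo (pw m / 2) (2 * pw m)

lemma O_open (m : ℕ) : IsOpen (O m) := isOpen_Ioo

lemma LvSet_subset_O (m k : ℕ) : LvSet m k ⊆ O m := by
  rintro x ⟨F, ⟨hmF, hlb, _⟩, rfl⟩
  have h1 : pw m ≤ pt F := pw_le_pt hmF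
  have h2 : pt F ≤ (4:ℝ)⁻¹^m / 3 := pt_le hlb
  have h3 : pw m = (4:ℝ)⁻¹^m * 4⁻¹ := pow_succ _ _
  have h4 : (0:ℝ) < (4:ℝ)⁻¹^m := by positivity
  have h5 : 0 < pw m := pw_pos m
  constructor
  · linarith
  · rw [h3]; linarith

lemma O_disj : ∀ m m' : ℕ, m ≠ m' → ∀ x : ℝ, x ∈ O m → x ∈ O m' → False := by
  have key : ∀ m m' : ℕ, m < m' → ∀ x : ℝ, x ∈ O m → x ∈ O m' → False := by
    intro m m' hlt x hx hx'
    have h1 : pw m / 2 < x := hx.1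
    have h2 : x < 2 * pw m' := hx'.2
    have h3 : pw m' ≤ pw (m+1) := pw_anti (by omega)
    have h4 : pw (m+1) = pw m * 4⁻¹ := pow_succ _ _
    linarith
  intro m m' hne x hx hx'
  rcases lt_or_gt_of_ne hne with h | h
  · exact key m m' h x hx hx'
  · exact key m' m h x hx' hx

def Lam : Set ℝ := ⋃ m, Tg m (m+1)

lemma Lam_mem {x : ℝ} : x ∈ Lam ↔ ∃ m F, Good m F ∧ pt F = x := by
  constructor
  · intro hx
    rcases mem_iUnion.1 hx with ⟨m, hm⟩
    rcases hm with ⟨F, hF, hpt⟩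
    exact ⟨m, F, hF, hpt⟩
  · rintro ⟨m, F, hG, rfl⟩
    exact mem_iUnion.2 ⟨m, ⟨F, hG, rfl⟩⟩

lemma zero_notMem_Lam : (0:ℝ) ∉ Lam := by
  intro h
  rcases Lam_mem.1 h with ⟨m, F, hG, hpt⟩
  have h1 : pw m ≤ pt F := pw_le_pt hG.1
  have h2 := pw_pos m
  rw [hpt] at h1
  linarith

lemma Lam_closed : IsClosed ({0} ∪ Lam) := by
  apply closed_union_aux
  · exact fun m => Tg_closed m (m+1)
  · intro m x hx
    have h1 := Tg_subset m (m+1) hx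
    have h2 : (4:ℝ)⁻¹^m / 3 ≤ (4:ℝ)⁻¹^m := by
      have : (0:ℝ) ≤ (4:ℝ)⁻¹^m := by positivity
      linarith
    exact ⟨le_trans (pw_nonneg m) h1.1, le_trans h1.2 h2⟩

lemma Lam_compl_isGδ : IsGδ (Lamᶜ) := by
  have h : Lamᶜ = (({0} : Set ℝ) ∪ Lam)ᶜ ∪ {0} := by
    ext x
    simp only [mem_compl_iff, mem_union, mem_singleton_iff]
    constructor
    · intro hL
      by_cases h0 : x = 0
      · exact Or.inr h0
      · exact Or.inl (by rintro (h | h); exact h0 h; exact hL h)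
    · rintro (h | rfl)
      · exact fun hx => h (Or.inr hx)
      · exact zero_notMem_Lam
  rw [h]
  exact (Lam_closed.isOpen_compl.isGδ).union isClosed_singleton.isGδ

/-! ### Gδ machinery -/

lemma isGδ_iUnion_disjoint (W : ℕ → Set ℝ) (O' : ℕ → Set ℝ)
    (hO : ∀ m, IsOpen (O' m)) (hWO : ∀ m, W m ⊆ O' m)
    (hd : ∀ m m', m ≠ m' → ∀ x, x ∈ O' m → x ∈ O' m' → False)
    (hW : ∀ m, IsGδ (W m)) : IsGδ (⋃ m, W m) := by
  have h1 : ∀ m, ∃ U : ℕ → Set ℝ, (∀ n, IsOpen (U n)) ∧ W m = ⋂ n, U n :=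
    fun m => (hW m).eq_iInter_nat
  choose U hUo hUe using h1
  have key : (⋃ m, W m) = ⋂ n, ⋃ m, (U m n ∩ O' m) := by
    ext x
    constructor
    · intro hx
      rcases mem_iUnion.1 hx with ⟨m, hm⟩
      refine mem_iInter.2 fun n => mem_iUnion.2 ⟨m, ?_, hWO m hm⟩
      have : x ∈ ⋂ n, U m n := (hUe m) ▸ hm
      exact mem_iInter.1 this n
    · intro hx
      obtain ⟨m0, hm0⟩ := mem_iUnion.1 (mem_iInter.1 hx 0)
      refine mem_iUnion.2 ⟨m0, ?_⟩
      rw [hUe m0]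
      refine mem_iInter.2 fun n => ?_
      obtain ⟨m, hm⟩ := mem_iUnion.1 (mem_iInter.1 hx n)
      rcases eq_or_ne m m0 with rfl | hne
      · exact hm.1
      · exact absurd (hd m m0 hne x hm.2 hm0.2) not_false
  rw [key]
  exact IsGδ.iInter_of_isOpen fun n => isOpen_iUnion fun m => (hUo m n).inter (hO m)

/-! ### Preimage computation -/

lemma g_preimage (V : Set ℝ) :
    g ⁻¹' V =
      (⋃ m, ⋃ k, ⋃ (_ : 1 ≤ k ∧ ((k : ℕ) : ℝ)⁻¹ ∈ V), LvSet m k) ∪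
        {x : ℝ | x ∉ Lam ∧ (0:ℝ) ∈ V} := by
  ext x
  by_cases hx : ∃ m F, Good m F ∧ pt F = x
  · obtain ⟨m, F, hG, rfl⟩ := hx
    have hgx : g (pt F) = ((lev m F : ℕ) : ℝ)⁻¹ := g_eval hG
    simp only [mem_preimage, mem_union, mem_iUnion, mem_setOf_eq]
    constructor
    · intro hV
      left
      refine ⟨m, lev m F, ⟨lev_pos hG, by rwa [← hgx]⟩, ?_⟩
      exact ⟨F, ⟨hG.1, hG.2.1, card_add_lev hG⟩, rfl⟩
    · rintro (⟨m', k', ⟨hk1, hkV⟩, hmem⟩ | ⟨hnL, h0⟩)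
      · obtain ⟨F', ⟨hm', hlb', hck'⟩, hpt'⟩ := hmem
        have hFF : F' = F := pt_inj _ _ hpt'
        subst hFF
        have hmm : m' = m := min_unique hm' hlb' hG.1 hG.2.1
        subst hmm
        have hkk : k' = lev m' F' := by
          have := card_add_lev hG
          omega
        rw [hgx, ← hkk]
        exact hkV
      · exact absurd (Lam_mem.2 ⟨m, F, hG, rfl⟩) hnL
  · have hg0 : g x = 0 := g_zero hx
    simp only [mem_preimage, hg0, mem_union, mem_iUnion, mem_setOf_eq]
    constructor
    · intro h0
      right
      exact ⟨fun hL => hx (Lam_mem.1 hL), h0⟩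
    · rintro (⟨m, k, ⟨hk1, _⟩, hmem⟩ | ⟨_, h0⟩)
      · exfalso
        obtain ⟨F, ⟨hmF, hlb, hck⟩, hpt⟩ := hmem
        exact hx ⟨m, F, ⟨hmF, hlb, by omega⟩, hpt⟩
      · exact h0

lemma g_preimage_isGδ (V : Set ℝ) : IsGδ (g ⁻¹' V) := by
  classical
  rw [g_preimage]
  refine IsGδ.union ?_ ?_
  · apply isGδ_iUnion_disjoint _ O O_open ?_ O_disj ?_
    · intro m
      exact Set.iUnion_subset fun k => Set.iUnion_subset fun _ => LvSet_subset_O m k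
    · intro m
      have he : (⋃ k, ⋃ (_ : 1 ≤ k ∧ ((k : ℕ) : ℝ)⁻¹ ∈ V), LvSet m k) =
          ⋃ k ∈ {k : ℕ | k < m + 2 ∧ (1 ≤ k ∧ ((k : ℕ) : ℝ)⁻¹ ∈ V)}, LvSet m k := by
        ext x
        simp only [mem_iUnion, mem_setOf_eq]
        constructor
        · rintro ⟨k, hP, hx⟩
          refine ⟨k, ⟨?_, hP⟩, hx⟩
          obtain ⟨F, ⟨hmF, _, hck⟩, _⟩ := hx
          have := Finset.card_pos.2 ⟨m, hmF⟩
          omega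
        · rintro ⟨k, ⟨_, hP⟩, hx⟩
          exact ⟨k, hP, hx⟩
      rw [he]
      apply IsGδ.biUnion ((Set.finite_Iio (m+2)).subset (fun k hk => hk.1))
      intro k hk
      rw [LvSet_eq hk.2.1, diff_eq]
      exact ((Tg_closed _ _).isGδ).inter (Tg_closed _ _).isOpen_compl.isGδ
  · by_cases h0 : (0:ℝ) ∈ V
    · have h : {x : ℝ | x ∉ Lam ∧ (0:ℝ) ∈ V} = Lamᶜ := by
        ext x; simp [h0, mem_compl_iff]
      rw [h]
      exact Lam_compl_isGδ
    · have h : {x : ℝ | x ∉ Lam ∧ (0:ℝ) ∈ V} = ∅ := by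
        ext x; simp [h0]
      rw [h]
      exact IsGδ.empty

/-! ### Non-continuity ingredients -/

lemma pt_mem_Icc (F : Finset ℕ) : pt F ∈ Set.Icc (0:ℝ) 1 := by
  refine ⟨pt_nonneg F, ?_⟩
  have := pt_le (d := 0) (F := F) (fun i _ => Nat.zero_le i)
  simp at this
  linarith

lemma val_sep {k : ℕ} (hk : 1 ≤ k) {v : ℝ}
    (hv : v = 0 ∨ ∃ j : ℕ, 1 ≤ j ∧ v = ((j : ℕ) : ℝ)⁻¹)
    (h : |v - ((k : ℕ) : ℝ)⁻¹| < ((k : ℕ) : ℝ)⁻¹ - (((k : ℕ) : ℝ) + 1)⁻¹) :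
    v = ((k : ℕ) : ℝ)⁻¹ := by
  have hk0 : (0:ℝ) < (k : ℕ) := by exact_mod_cast hk
  have hk1 : (0:ℝ) < (k : ℕ) + 1 := by linarith
  rcases hv with rfl | ⟨j, hj, rfl⟩
  · exfalso
    rw [zero_sub, abs_neg, abs_of_pos (by positivity)] at h
    have : (0:ℝ) < ((k : ℕ) : ℝ)⁻¹ - (((k : ℕ) : ℝ) + 1)⁻¹ - ((k : ℕ) : ℝ)⁻¹ := by linarith
    have h2 : (0:ℝ) < (((k : ℕ) : ℝ) + 1)⁻¹ := by positivity
    linarith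
  · rcases eq_or_ne j k with rfl | hjk
    · rfl
    · exfalso
      have hj0 : (0:ℝ) < (j : ℕ) := by exact_mod_cast hj
      have hkey : ((k : ℕ) : ℝ)⁻¹ - (((k : ℕ) : ℝ) + 1)⁻¹ ≤ |((j : ℕ) : ℝ)⁻¹ - ((k : ℕ) : ℝ)⁻¹| := by
        rcases lt_or_gt_of_ne hjk with hlt | hlt
        · -- j < k
          have hcast : (j:ℝ) + 1 ≤ (k:ℝ) := by exact_mod_cast hlt
          have h1 : ((j : ℕ) : ℝ)⁻¹ - ((k : ℕ) : ℝ)⁻¹ = ((k:ℝ) - (j:ℝ)) / ((j:ℝ) * (k:ℝ)) :=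
            inv_sub_inv (by positivity) (by positivity)
          have h2 : ((k : ℕ) : ℝ)⁻¹ - (((k : ℕ) : ℝ) + 1)⁻¹
              = (((k:ℝ) + 1) - (k:ℝ)) / ((k:ℝ) * ((k:ℝ) + 1)) :=
            inv_sub_inv (by positivity) (by positivity)
          have h3 : (((k:ℝ) + 1) - (k:ℝ)) / ((k:ℝ) * ((k:ℝ) + 1))
              ≤ ((k:ℝ) - (j:ℝ)) / ((j:ℝ) * (k:ℝ)) := by
            apply div_le_div₀ (by linarith) (by linarith) (mul_pos hj0 hk0)
            nlinarith
          have h4 : (0:ℝ) ≤ ((j : ℕ) : ℝ)⁻¹ - ((k : ℕ) : ℝ)⁻¹ := by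
            rw [h1]
            apply div_nonneg (by linarith) (by positivity)
          rw [abs_of_nonneg h4, h1, h2]
          exact h3
        · -- k < j
          have hcast : (k:ℝ) + 1 ≤ (j:ℝ) := by exact_mod_cast hlt
          have h1 : ((j : ℕ) : ℝ)⁻¹ ≤ (((k : ℕ) : ℝ) + 1)⁻¹ := by
            apply inv_anti₀ (by positivity) hcast
          have h2 : ((j : ℕ) : ℝ)⁻¹ - ((k : ℕ) : ℝ)⁻¹ ≤ 0 := by
            have : ((j : ℕ) : ℝ)⁻¹ ≤ ((k : ℕ) : ℝ)⁻¹ := by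
              apply inv_anti₀ hk0 (by linarith)
            linarith
          rw [abs_of_nonpos h2]
          linarith
      linarith [le_of_lt (lt_of_le_of_lt hkey h)]

lemma exists_bigger {m : ℕ} {F : Finset ℕ} (h : Good m F) (hc : F.card + 1 ≤ m + 1)
    {r : ℝ} (hr : 0 < r) :
    ∃ F' : Finset ℕ, Good m F' ∧ F'.card = F.card + 1 ∧
      pt F ≤ pt F' ∧ pt F' < pt F + r := by
  obtain ⟨n0, hn0⟩ := exists_pow_lt_of_lt_one hr (show (4:ℝ)⁻¹ < 1 by norm_num)
  have hne : F.Nonempty := ⟨m, h.1⟩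
  set n := max n0 (F.max' hne + 1) with hn
  have hnF : n ∉ F := by
    intro hmem
    have := F.le_max' n hmem
    omega
  have hpwn : pw n < r := by
    have h1 : pw n ≤ (4:ℝ)⁻¹ ^ n0 :=
      pow_le_pow_of_le_one (by norm_num) (by norm_num) (by omega)
    linarith
  refine ⟨insert n F, ⟨Finset.mem_insert_of_mem h.1, ?_, ?_⟩, ?_, ?_, ?_⟩
  · intro i hi
    rcases Finset.mem_insert.1 hi with rfl | hi
    · have h1 := h.2.1 _ (F.max'_mem hne)
      have h2 := F.le_max' m h.1
      omega
    · exact h.2.1 i hi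
  · rw [Finset.card_insert_of_notMem hnF]; omega
  · rw [Finset.card_insert_of_notMem hnF]
  · show pt F ≤ pt (insert n F)
    unfold pt
    rw [Finset.sum_insert hnF]
    have := pw_nonneg n
    linarith [le_refl (∑ i ∈ F, pw i)]
  · show pt (insert n F) < pt F + r
    unfold pt
    rw [Finset.sum_insert hnF]
    have : ∑ i ∈ F, pw i = pt F := rfl
    linarith

end Delta2Aux

open Delta2Aux

/-- There is a `Δ₂`-measurable function `f : [0,1] → [0,1]` with range contained in
`{0} ∪ {1/k : k ≥ 1}` which is not `d`-continuous for any natural number `d`. -/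
theorem exists_Delta2_measurable_not_finitely_continuous :
    ∃ f : Set.Icc (0:ℝ) 1 → Set.Icc (0:ℝ) 1,
      -- (i) the range of `f` is contained in `{0} ∪ {1/k : k ∈ ℕ, k ≥ 1}`
      (∀ x, (f x : ℝ) = 0 ∨ ∃ k : ℕ, 1 ≤ k ∧ (f x : ℝ) = 1 / (k : ℝ)) ∧
      -- (ii) `f` is `Δ₂`-measurable: preimages of open sets are both `Fσ` and `Gδ`
      (∀ V : Set ℝ, IsOpen V →
        (∃ C : ℕ → Set (Set.Icc (0:ℝ) 1), (∀ n, IsClosed (C n)) ∧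
          (fun x => (f x : ℝ)) ⁻¹' V = ⋃ n, C n) ∧
        (∃ U : ℕ → Set (Set.Icc (0:ℝ) 1), (∀ n, IsOpen (U n)) ∧
          (fun x => (f x : ℝ)) ⁻¹' V = ⋂ n, U n)) ∧
      -- (iii) `f` is not `d`-continuous for any `d`
      (∀ d : ℕ, ¬ ∃ D : Fin d → Set (Set.Icc (0:ℝ) 1),
        (⋃ i, D i) = Set.univ ∧ ∀ i, ContinuousOn f (D i)) := by
  classical
  refine ⟨fun x => ⟨g x.1, g_mem_Icc x.1⟩, ?_, ?_, ?_⟩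
  · -- (i)
    intro x
    rcases g_cases x.1 with h | ⟨k, hk, h⟩
    · exact Or.inl h
    · exact Or.inr ⟨k, hk, by rw [one_div]; exact h⟩
  · -- (ii)
    intro V _hV
    constructor
    · -- Fσ
      obtain ⟨U, hUo, hUe⟩ := (g_preimage_isGδ Vᶜ).eq_iInter_nat
      refine ⟨fun n => Subtype.val ⁻¹' (U n)ᶜ,
        fun n => (hUo n).isClosed_compl.preimage continuous_subtype_val, ?_⟩
      show Subtype.val ⁻¹' (g ⁻¹' V) = _
      have hc : g ⁻¹' V = ⋃ n, (U n)ᶜ := by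
        have h1 : (g ⁻¹' V)ᶜ = ⋂ n, U n := by
          rw [← Set.preimage_compl]
          exact hUe
        rw [← compl_compl (g ⁻¹' V), h1, Set.compl_iInter]
      rw [hc, Set.preimage_iUnion]
    · -- Gδ
      obtain ⟨U, hUo, hUe⟩ := (g_preimage_isGδ V).eq_iInter_nat
      refine ⟨fun n => Subtype.val ⁻¹' U n,
        fun n => (hUo n).preimage continuous_subtype_val, ?_⟩
      show Subtype.val ⁻¹' (g ⁻¹' V) = _
      rw [hUe, Set.preimage_iInter]
  · -- (iii)
    rintro d ⟨D, hcov, hcont⟩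
    have key : ∀ c : ℕ, ∀ m : ℕ, ∀ F : Finset ℕ, Good m F → F.card + c ≤ m + 1 →
        ∀ U : Set ℝ, IsOpen U → pt F ∈ U →
        ∃ S : Finset (Fin d), c + 1 ≤ S.card ∧
          ∀ i ∈ S, ∃ y : Set.Icc (0:ℝ) 1, y ∈ D i ∧ (y:ℝ) ∈ U ∧
            ((lev m F : ℕ) : ℝ)⁻¹ ≤ g (y:ℝ) := by
      intro c
      induction c with
      | zero =>
        intro m F hG _ U _ hxU
        set x : Set.Icc (0:ℝ) 1 := ⟨pt F, pt_mem_Icc F⟩ with hx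
        have hx1 : x ∈ ⋃ i, D i := by rw [hcov]; exact mem_univ x
        obtain ⟨i, hi⟩ := mem_iUnion.1 hx1
        refine ⟨{i}, by simp, ?_⟩
        intro i' hi'
        rw [Finset.mem_singleton] at hi'
        subst hi'
        refine ⟨x, hi, hxU, ?_⟩
        have : g (x:ℝ) = ((lev m F : ℕ) : ℝ)⁻¹ := g_eval hG
        rw [this]
      | succ c ih =>
        intro m F hG hc U hU hxU
        set k := lev m F with hk
        have hck : F.card + k = m + 2 := card_add_lev hG
        have hk2 : c + 2 ≤ k := by omega
        set x : Set.Icc (0:ℝ) 1 := ⟨pt F, pt_mem_Icc F⟩ with hx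
        have hx1 : x ∈ ⋃ i, D i := by rw [hcov]; exact mem_univ x
        obtain ⟨i0, hi0⟩ := mem_iUnion.1 hx1
        have hcw : ContinuousWithinAt (fun x : Set.Icc (0:ℝ) 1 =>
            (⟨g x.1, g_mem_Icc x.1⟩ : Set.Icc (0:ℝ) 1)) (D i0) x := hcont i0 x hi0
        set ε := ((k : ℕ) : ℝ)⁻¹ - (((k : ℕ) : ℝ) + 1)⁻¹ with hε
        have hkpos : (0:ℝ) < (k : ℕ) := by
          have : 1 ≤ k := by omega
          exact_mod_cast this
        have hεpos : 0 < ε := by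
          rw [hε]
          have h1 : (((k : ℕ) : ℝ) + 1)⁻¹ < ((k : ℕ) : ℝ)⁻¹ := by
            apply inv_strictAnti₀ hkpos
            linarith
          linarith
        obtain ⟨δ, hδpos, hδ⟩ := Metric.continuousWithinAt_iff.1 hcw ε hεpos
        have hgx : g (x:ℝ) = ((k : ℕ) : ℝ)⁻¹ := by
          rw [hk]; exact g_eval hG
        have hclaim : ∀ y : Set.Icc (0:ℝ) 1, y ∈ D i0 →
            dist (y:ℝ) (x:ℝ) < δ → g (y:ℝ) = ((k : ℕ) : ℝ)⁻¹ := by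
          intro y hyD hyd
          have h1 : dist y x < δ := by
            rw [Subtype.dist_eq]; exact hyd
          have h2 := hδ hyD h1
          have h3 : |g (y:ℝ) - g (x:ℝ)| < ε := by
            rw [Subtype.dist_eq, Real.dist_eq] at h2
            exact h2
          rw [hgx] at h3
          exact val_sep (by omega) (g_cases (y:ℝ)) h3
        obtain ⟨r, hrpos, hrball⟩ := Metric.isOpen_iff.1 (hU.inter Metric.isOpen_ball)
          (x:ℝ) ⟨hxU, Metric.mem_ball_self hδpos⟩
        obtain ⟨F', hG', hcard', hle', hlt'⟩ := exists_bigger hG (by omega) hrpos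
        have hx' : pt F' ∈ U ∩ Metric.ball (x:ℝ) δ := by
          apply hrball
          rw [Metric.mem_ball, Real.dist_eq]
          have : (x:ℝ) = pt F := rfl
          rw [this, abs_of_nonneg (by linarith)]
          linarith
        have hc' : F'.card + c ≤ m + 1 := by omega
        obtain ⟨S, hScard, hSmem⟩ := ih m F' hG' hc'
          (U ∩ Metric.ball (x:ℝ) δ) (hU.inter Metric.isOpen_ball) hx'
        have hlev' : lev m F' + 1 = k := by
          have := card_add_lev hG'
          omega
        have hlevpos' : (0:ℝ) < ((lev m F' : ℕ) : ℝ) := by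
          have := lev_pos hG'
          exact_mod_cast this
        have hi0S : i0 ∉ S := by
          intro hmem
          obtain ⟨y, hyD, hyU, hyg⟩ := hSmem i0 hmem
          have hygk : g (y:ℝ) = ((k : ℕ) : ℝ)⁻¹ := by
            apply hclaim y hyD
            exact Metric.mem_ball.1 hyU.2
          have hlt : ((k : ℕ) : ℝ)⁻¹ < ((lev m F' : ℕ) : ℝ)⁻¹ := by
            apply inv_strictAnti₀ hlevpos'
            have : lev m F' < k := by omega
            exact_mod_cast this
          rw [hygk] at hyg
          linarith
        refine ⟨insert i0 S, ?_, ?_⟩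
        · rw [Finset.card_insert_of_notMem hi0S]
          omega
        · intro i hi
          rcases Finset.mem_insert.1 hi with rfl | hiS
          · refine ⟨x, hi0, hxU, ?_⟩
            rw [hgx]
          · obtain ⟨y, h1, h2, h3⟩ := hSmem i hiS
            refine ⟨y, h1, h2.1, ?_⟩
            have h4 : ((k : ℕ) : ℝ)⁻¹ ≤ ((lev m F' : ℕ) : ℝ)⁻¹ := by
              apply inv_anti₀ hlevpos'
              have : lev m F' ≤ k := by omega
              exact_mod_cast this
            rw [hk]
            linarith
    obtain ⟨S, hS, _⟩ := key d d {d}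
      ⟨Finset.mem_singleton_self d, fun i hi => by
        rw [Finset.mem_singleton] at hi; omega, by simp⟩
      (by simp; omega) univ isOpen_univ (mem_univ _)

    have h1 : S.card ≤ d := by
      have := Finset.card_le_univ S
      simpa [Finset.card_univ] using this
    omega
end
end

section
/- Fix a natural number d ≥ 1 and consider the function Card_d : ℝ^d → ℕ defined by Card_d(x_1,…,x_d) = the cardinality of the set {x_1,…,x_d}. Then Card_d is d-continuous (indeed it is constant on each of the d sets {x ∈ ℝ^d : Card_d(x) = k}, k = 1,…,d), but Card_d is not (d−1)-continuous. Hence the minimal number of pieces into which ℝ^d can be partitioned so that Card_d is continuous on each piece equals d. -/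
/-!
Near a point with `k < d` distinct coordinates, moving one of two equal coordinates to a fresh
value gives points with `k + 1` distinct coordinates. Since `ℕ` is discrete, a piece on which the
cardinality is continuous sees only the value `k` near such a point of that piece; so climbing
from a constant vector (value `1`) to a vector with distinct coordinates (value `d`) forces a new
piece at each of the `d` levels. The level sets themselves give a cover by `d` pieces.
-/

open Set Filter Topology Function

/-- The paper's `n`-continuity. -/
def IsPiecewiseContinuous {X Y : Type*} [TopologicalSpace X] [TopologicalSpace Y]
    (n : ℕ) (f : X → Y) : Prop :=
  ∃ D : Fin n → Set X, (⋃ i, D i) = univ ∧ ∀ i, ContinuousOn f (D i)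

section NatValued

variable {X : Type*} [TopologicalSpace X] {f : X → ℕ}

theorem isPiecewiseContinuous_of_forall_mem_Icc {n : ℕ} (hf : ∀ x, f x ∈ Icc 1 n) :
    IsPiecewiseContinuous n f := by
  refine ⟨fun i ↦ {x | f x = i + 1}, eq_univ_of_forall fun x ↦ ?_,
    fun i ↦ continuousOn_const.congr fun x hx ↦ hx⟩
  obtain ⟨h₁, h₂⟩ := hf x
  exact mem_iUnion.2 ⟨⟨f x - 1, by omega⟩, show f x = f x - 1 + 1 by omega⟩

/-- The piece containing `x` is stuck at the value `f x` near `x`, so it can be dropped when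
covering the higher values near a nearby `y` with `f y = f x + 1`. -/
theorem le_add_card_of_subset_biUnion {ι : Type*} {N : ℕ}
    (hf : ∀ x, f x < N → x ∈ closure {y | f y = f x + 1}) {D : ι → Set X}
    (hD : ∀ i, ContinuousOn f (D i)) {U : Set X} (hU : IsOpen U) {x : X} (hx : x ∈ U)
    {S : Finset ι} (hS : U ∩ {y | f x ≤ f y} ⊆ ⋃ i ∈ S, D i) :
    N + 1 ≤ f x + S.card := by
  classical
  induction hk : N - f x generalizing x U S with
  | zero =>
    obtain ⟨i, hiS, -⟩ : ∃ i ∈ S, x ∈ D i := by simpa using hS ⟨hx, (le_rfl : f x ≤ f x)⟩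
    have := Finset.card_pos.2 ⟨i, hiS⟩
    omega
  | succ k ih =>
    obtain ⟨i, hiS, hxi⟩ : ∃ i ∈ S, x ∈ D i := by simpa using hS ⟨hx, (le_rfl : f x ≤ f x)⟩
    obtain ⟨V, hV, hxV, hVi⟩ :=
      mem_nhdsWithin.1 (hD i x hxi ((isOpen_discrete {f x}).mem_nhds rfl))
    obtain ⟨y, ⟨hyU, hyV⟩, hfy : f y = f x + 1⟩ :=
      mem_closure_iff.1 (hf x (by omega)) (U ∩ V) (hU.inter hV) ⟨hx, hxV⟩
    have hS' : U ∩ V ∩ {z | f y ≤ f z} ⊆ ⋃ j ∈ S.erase i, D j := by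
      rintro z ⟨⟨hzU, hzV⟩, hz : f y ≤ f z⟩
      obtain ⟨j, hjS, hzj⟩ : ∃ j ∈ S, z ∈ D j := by
        simpa using hS ⟨hzU, (show f x ≤ f z by omega)⟩
      have hji : j ≠ i := by
        rintro rfl
        have : f z = f x := hVi ⟨hzV, hzj⟩
        omega
      exact mem_biUnion (Finset.mem_erase.2 ⟨hji, hjS⟩) hzj
    have := ih (hU.inter hV) ⟨hyU, hyV⟩ hS' (by omega)
    rw [Finset.card_erase_of_mem hiS] at this
    have := Finset.card_pos.2 ⟨i, hiS⟩
    omega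

theorem IsPiecewiseContinuous.le_add {N : ℕ}
    (hf : ∀ x, f x < N → x ∈ closure {y | f y = f x + 1}) {n : ℕ}
    (h : IsPiecewiseContinuous n f) (x : X) :
    N + 1 ≤ f x + n := by
  obtain ⟨D, hcover, hD⟩ := h
  simpa using le_add_card_of_subset_biUnion hf hD isOpen_univ (mem_univ x)
    (S := Finset.univ) (by simp [hcover])

end NatValued

theorem Finset.image_update_univ_of_apply_eq {ι α : Type*} [Fintype ι] [DecidableEq ι]
    [DecidableEq α] {x : ι → α} {i j : ι} (hij : i ≠ j) (hx : x i = x j) (z : α) :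
    univ.image (update x i z) = insert z (univ.image x) := by
  ext a
  simp only [mem_image, mem_insert, mem_univ, true_and]
  constructor
  · rintro ⟨k, rfl⟩
    by_cases hk : k = i
    · subst hk
      simp
    · exact Or.inr ⟨k, (update_of_ne hk _ _).symm⟩
  · rintro (rfl | ⟨k, rfl⟩)
    · exact ⟨i, update_self _ _ _⟩
    · by_cases hk : k = i
      · subst hk
        exact ⟨j, by rw [update_of_ne hij.symm, hx]⟩
      · exact ⟨k, update_of_ne hk _ _⟩

theorem mem_closure_card_image_eq_succ {ι α : Type*} [Fintype ι] [DecidableEq α]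
    [TopologicalSpace α] [T1Space α] [∀ a : α, (𝓝[≠] a).NeBot] {x : ι → α}
    (hx : (Finset.univ.image x).card < Fintype.card ι) :
    x ∈ closure {y : ι → α | (Finset.univ.image y).card = (Finset.univ.image x).card + 1} := by
  classical
  obtain ⟨i, -, j, -, hij, hxij⟩ := Finset.exists_ne_map_eq_of_card_lt_of_maps_to hx
    fun k _ ↦ Finset.mem_image_of_mem x (Finset.mem_univ k)
  have htends : Tendsto (update x i) (𝓝[≠] (x i)) (𝓝 x) := by
    have hcont : Continuous (update x i) := continuous_const.update i continuous_id
    simpa using (hcont.tendsto (x i)).mono_left nhdsWithin_le_nhds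
  refine mem_closure_of_tendsto htends ?_
  filter_upwards [nhdsNE_le_cofinite (x i) (Finset.univ.image x).finite_toSet.compl_mem_cofinite]
    with z hz
  rw [Finset.image_update_univ_of_apply_eq hij hxij, Finset.card_insert_of_notMem hz]

/-- The map `Card_d : ℝ^d → ℕ`, `(x_1,…,x_d) ↦ Card {x_1,…,x_d}`, is `d`-continuous
(indeed constant on each level set `{x : Card_d x = k}`, `k = 1,…,d`) but not
`(d-1)`-continuous; the least number of pieces making it piecewise continuous is `d`. -/
theorem card_function_exactly_d_continuous (d : ℕ) (hd : 1 ≤ d) :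
    (∀ k : ℕ, ∀ x y : Fin d → ℝ,
        x ∈ {z : Fin d → ℝ | (Finset.univ.image z).card = k} →
        y ∈ {z : Fin d → ℝ | (Finset.univ.image z).card = k} →
        (Finset.univ.image x).card = (Finset.univ.image y).card) ∧
    (∃ D : Fin d → Set (Fin d → ℝ), (⋃ i, D i) = Set.univ ∧
      ∀ i, ContinuousOn (fun x : Fin d → ℝ => (Finset.univ.image x).card) (D i)) ∧
    (¬ ∃ D : Fin (d - 1) → Set (Fin d → ℝ), (⋃ i, D i) = Set.univ ∧
      ∀ i, ContinuousOn (fun x : Fin d → ℝ => (Finset.univ.image x).card) (D i)) ∧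
    IsLeast {k : ℕ | ∃ D : Fin k → Set (Fin d → ℝ), (⋃ i, D i) = Set.univ ∧
      ∀ i, ContinuousOn (fun x : Fin d → ℝ => (Finset.univ.image x).card) (D i)} d := by
  have : NeZero d := ⟨by omega⟩
  have hupper : IsPiecewiseContinuous d fun x : Fin d → ℝ ↦ (Finset.univ.image x).card :=
    isPiecewiseContinuous_of_forall_mem_Icc fun x ↦
      ⟨Finset.card_pos.2 (Finset.univ_nonempty.image x), Finset.card_image_le.trans (by simp)⟩
  have hlower : ∀ m, IsPiecewiseContinuous m (fun x : Fin d → ℝ ↦ (Finset.univ.image x).card) →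
      d ≤ m := fun m h ↦ by
    have := h.le_add (N := d)
      (fun x hx ↦ mem_closure_card_image_eq_succ (by simpa using hx)) (fun _ ↦ 0)
    simp only [Finset.image_const Finset.univ_nonempty, Finset.card_singleton] at this
    omega
  exact ⟨fun k x y hx hy ↦ hx.trans hy.symm, hupper, fun h ↦ by have := hlower _ h; omega,
    hupper, hlower⟩
end

section
/- Fix natural numbers N, M ≥ 1 and let d = min(N, M). Consider the matrix rank function rank : ℝ^{N×M} → ℕ, where the space of real N×M matrices carries its usual Euclidean topology. Then rank is (d+1)-continuous (being constant on each of the sets {A : rank A = k}, k = 0,…,d), but rank is not d-continuous. Hence the minimal number of pieces into which ℝ^{N×M} can be partitioned so that rank is continuous on each piece equals d+1. -/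
/-!
Let `f : X → ℕ` be continuous on each of the pieces `D i` covering `X`, and suppose every point
`x` with `f x < d` is a limit of points where `f` takes the value `f x + 1`. Near a point `x`,
the piece containing `x` sees only the value `f x`, so a nearby point with value `f x + 1` lies
in a different piece; iterating inside shrinking neighbourhoods from a point where `f = 0`
produces `d + 1` distinct pieces. For the rank this applies to diagonal `N × M` matrices,
where the rank counts the nonzero diagonal entries and a zero entry can be perturbed to a small
nonzero one.
-/

open Set Filter Topology Matrix Function

theorem Matrix.rank_fromBlocks_zero_zero_zero {R m m' n n' : Type*} [CommRing R]
    [StrongRankCondition R] [Fintype m] [Fintype m'] [Fintype n] [Fintype n']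
    (A : Matrix m n R) :
    (fromBlocks A 0 0 0 : Matrix (m ⊕ m') (n ⊕ n') R).rank = A.rank := by
  classical
  refine le_antisymm ?_ ?_
  · have hfactor : (fromBlocks A 0 0 0 : Matrix (m ⊕ m') (n ⊕ n') R) =
        fromRows (1 : Matrix m m R) 0 * A * fromCols (1 : Matrix n n R) 0 := by
      ext (i | i) (j | j) <;> simp [fromRows_mul]
    rw [hfactor]
    exact (rank_mul_le_left _ _).trans (rank_mul_le_right _ _)
  · exact rank_submatrix_le (fromBlocks A 0 0 0 : Matrix (m ⊕ m') (n ⊕ n') R) Sum.inl Sum.inl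

section PiecewiseContinuous

variable {X ι : Type*} [TopologicalSpace X] [Finite ι] {f : X → ℕ} {D : ι → Set X} {d : ℕ}

theorem add_one_le_ncard_pieces_of_frequently_succ (hcov : ⋃ i, D i = univ)
    (hcont : ∀ i, ContinuousOn f (D i)) (hstep : ∀ x, f x < d → ∃ᶠ y in 𝓝 x, f y = f x + 1)
    (m : ℕ) {x : X} {U : Set X} (hU : U ∈ 𝓝 x) (hm : f x + m = d) :
    m + 1 ≤ {i | ∃ y ∈ U ∩ D i, f x ≤ f y}.ncard := by
  induction m generalizing x U with
  | zero =>
    obtain ⟨i₀, hxi₀⟩ := mem_iUnion.1 (hcov ▸ mem_univ x)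
    exact (ncard_pos).2 ⟨i₀, x, ⟨mem_of_mem_nhds hU, hxi₀⟩, le_rfl⟩
  | succ m ih =>
    obtain ⟨i₀, hxi₀⟩ := mem_iUnion.1 (hcov ▸ mem_univ x)
    have hconst : ∀ᶠ y in 𝓝[D i₀] x, f y = f x :=
      hcont i₀ x hxi₀ ((isOpen_discrete {f x}).mem_nhds rfl)
    set P := {y | y ∈ U ∧ (y ∈ D i₀ → f y = f x)}
    have hP : P ∈ 𝓝 x := inter_mem hU (eventually_nhdsWithin_iff.1 hconst)
    obtain ⟨y, hfy, hPy⟩ :=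
      ((hstep x (by omega)).and_eventually (eventually_eventually_nhds.2 hP)).exists
    have hi₀ : i₀ ∉ {i | ∃ z ∈ P ∩ D i, f y ≤ f z} := by
      rintro ⟨z, ⟨⟨-, hzconst⟩, hz⟩, hyz⟩
      have := hzconst hz
      omega
    have hsub : insert i₀ {i | ∃ z ∈ P ∩ D i, f y ≤ f z} ⊆ {i | ∃ y ∈ U ∩ D i, f x ≤ f y} := by
      refine insert_subset ⟨x, ⟨mem_of_mem_nhds hU, hxi₀⟩, le_rfl⟩ ?_
      rintro i ⟨z, ⟨⟨hzU, -⟩, hz⟩, hyz⟩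
      exact ⟨z, ⟨hzU, hz⟩, by omega⟩
    calc m + 1 + 1 ≤ {i | ∃ z ∈ P ∩ D i, f y ≤ f z}.ncard + 1 :=
          Nat.succ_le_succ (ih (U := P) hPy (by omega))
      _ = (insert i₀ {i | ∃ z ∈ P ∩ D i, f y ≤ f z}).ncard := (ncard_insert_of_notMem hi₀).symm
      _ ≤ _ := ncard_le_ncard hsub

theorem add_one_le_card_of_continuousOn_cover (hcov : ⋃ i, D i = univ)
    (hcont : ∀ i, ContinuousOn f (D i)) (hstep : ∀ x, f x < d → ∃ᶠ y in 𝓝 x, f y = f x + 1)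
    {x₀ : X} (hx₀ : f x₀ = 0) : d + 1 ≤ Nat.card ι :=
  (add_one_le_ncard_pieces_of_frequently_succ hcov hcont hstep d (univ_mem (f := 𝓝 x₀))
    (by omega)).trans (ncard_le_card _)

end PiecewiseContinuous

section Diagonal

variable {K ι : Type*} [Field K] [Fintype ι] [DecidableEq ι]

theorem Matrix.rank_diagonal_update {s : ι → K} {j : ι} (hj : s j = 0) {δ : K} (hδ : δ ≠ 0) :
    (diagonal (update s j δ)).rank = (diagonal s).rank + 1 := by
  classical
  simp only [rank_diagonal, Fintype.card_subtype]
  rw [← Finset.card_insert_of_notMem (s := {i | s i ≠ 0}) (a := j) (by simp [hj])]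
  congr 1
  ext i
  by_cases hij : i = j
  · simp [hij, hδ]
  · simp [hij]

theorem Matrix.frequently_rank_diagonal_eq_succ [TopologicalSpace K] [(𝓝[≠] (0 : K)).NeBot]
    {s : ι → K} (hs : (diagonal s).rank < Fintype.card ι) :
    ∃ᶠ t in 𝓝 s, (diagonal t).rank = (diagonal s).rank + 1 := by
  classical
  obtain ⟨j, hj⟩ : ∃ j, s j = 0 := by
    by_contra! hne
    simp [rank_diagonal, hne] at hs
  have hlim : Tendsto (update s j) (𝓝[≠] 0) (𝓝 s) := by
    have hcont : Continuous (update s j) := continuous_const.update j continuous_id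
    have hs : update s j 0 = s := update_eq_self_iff.2 hj.symm
    simpa only [hs] using (hcont.tendsto 0).mono_left nhdsWithin_le_nhds
  have hupdate : ∀ᶠ δ in 𝓝[≠] 0, (diagonal (update s j δ)).rank = (diagonal s).rank + 1 :=
    eventually_nhdsWithin_of_forall fun _ hδ => rank_diagonal_update hj hδ
  exact hlim.frequently hupdate.frequently

end Diagonal

section PadDiagonal

variable {K : Type*} [Field K]

def Matrix.padDiagonal (N M : ℕ) (s : Fin (min N M) → K) : Matrix (Fin N) (Fin M) K :=
  reindex (finSumFinEquiv.trans (finCongr (Nat.add_sub_cancel' (min_le_left N M))))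
    (finSumFinEquiv.trans (finCongr (Nat.add_sub_cancel' (min_le_right N M))))
    (fromBlocks (diagonal s) 0 0 0)

theorem Matrix.continuous_padDiagonal [TopologicalSpace K] (N M : ℕ) :
    Continuous (padDiagonal (K := K) N M) := by
  unfold padDiagonal
  fun_prop

theorem Matrix.rank_padDiagonal (N M : ℕ) (s : Fin (min N M) → K) :
    (padDiagonal N M s).rank = (diagonal s).rank := by
  rw [padDiagonal, rank_reindex, rank_fromBlocks_zero_zero_zero]

end PadDiagonal

theorem Matrix.min_add_one_le_of_rank_continuousOn_cover {K : Type*} [Field K]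
    [TopologicalSpace K] [(𝓝[≠] (0 : K)).NeBot] {N M k : ℕ}
    (D : Fin k → Set (Matrix (Fin N) (Fin M) K)) (hcov : ⋃ i, D i = univ)
    (hcont : ∀ i, ContinuousOn (fun A : Matrix (Fin N) (Fin M) K => A.rank) (D i)) :
    min N M + 1 ≤ k := by
  have hcov' : ⋃ i, padDiagonal N M ⁻¹' D i = univ := by
    rw [← preimage_iUnion, hcov, preimage_univ]
  have hcont' (i : Fin k) :
      ContinuousOn (fun s => (padDiagonal N M s).rank) (padDiagonal N M ⁻¹' D i) :=
    (hcont i).comp (continuous_padDiagonal N M).continuousOn (mapsTo_preimage _ _)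
  have hstep (s : Fin (min N M) → K) (hs : (padDiagonal N M s).rank < min N M) :
      ∃ᶠ t in 𝓝 s, (padDiagonal N M t).rank = (padDiagonal N M s).rank + 1 := by
    simp only [rank_padDiagonal] at hs ⊢
    exact frequently_rank_diagonal_eq_succ (by simpa using hs)
  have hzero : (padDiagonal N M (0 : Fin (min N M) → K)).rank = 0 := by
    simp [rank_padDiagonal]
  simpa using add_one_le_card_of_continuousOn_cover hcov' hcont' hstep hzero

theorem Matrix.exists_rank_continuousOn_cover {R : Type*} [CommRing R] [StrongRankCondition R]
    [TopologicalSpace R] (N M : ℕ) :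
    ∃ D : Fin (min N M + 1) → Set (Matrix (Fin N) (Fin M) R),
      ⋃ i, D i = univ ∧ ∀ i, ContinuousOn (fun A : Matrix (Fin N) (Fin M) R => A.rank) (D i) := by
  refine ⟨fun i => {A | A.rank = i}, ?_, fun i => continuousOn_const.congr fun A hA => hA⟩
  refine eq_univ_of_forall fun A => mem_iUnion.2 ⟨⟨A.rank, ?_⟩, rfl⟩
  have := A.rank_le_height
  have := A.rank_le_width
  omega

theorem rank_exactly_d_plus_one_continuous_general (N M : ℕ) :
    (∀ k : ℕ, ∀ A B : Matrix (Fin N) (Fin M) ℝ,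
        A.rank = k → B.rank = k → A.rank = B.rank) ∧
    (∃ D : Fin (min N M + 1) → Set (Matrix (Fin N) (Fin M) ℝ),
      (⋃ i, D i) = Set.univ ∧
      ∀ i, ContinuousOn (fun A : Matrix (Fin N) (Fin M) ℝ => A.rank) (D i)) ∧
    (¬ ∃ D : Fin (min N M) → Set (Matrix (Fin N) (Fin M) ℝ),
      (⋃ i, D i) = Set.univ ∧
      ∀ i, ContinuousOn (fun A : Matrix (Fin N) (Fin M) ℝ => A.rank) (D i)) ∧
    IsLeast {k : ℕ | ∃ D : Fin k → Set (Matrix (Fin N) (Fin M) ℝ),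
      (⋃ i, D i) = Set.univ ∧
      ∀ i, ContinuousOn (fun A : Matrix (Fin N) (Fin M) ℝ => A.rank) (D i)}
      (min N M + 1) := by
  refine ⟨fun _ _ _ hA hB => hA.trans hB.symm, exists_rank_continuousOn_cover N M, ?_,
    exists_rank_continuousOn_cover N M, fun _ ⟨D, hcov, hcont⟩ =>
      min_add_one_le_of_rank_continuousOn_cover D hcov hcont⟩
  rintro ⟨D, hcov, hcont⟩
  have := min_add_one_le_of_rank_continuousOn_cover D hcov hcont
  omega

/-- The rank function on real `N × M` matrices is `(min N M + 1)`-continuous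
(being constant on each level set `{A : rank A = k}`) but not `(min N M)`-continuous;
the least number of pieces making it piecewise continuous is `min N M + 1`. -/
theorem rank_exactly_d_plus_one_continuous (N M : ℕ) (hN : 1 ≤ N) (hM : 1 ≤ M) :
    (∀ k : ℕ, ∀ A B : Matrix (Fin N) (Fin M) ℝ,
        A.rank = k → B.rank = k → A.rank = B.rank) ∧
    (∃ D : Fin (min N M + 1) → Set (Matrix (Fin N) (Fin M) ℝ),
      (⋃ i, D i) = Set.univ ∧
      ∀ i, ContinuousOn (fun A : Matrix (Fin N) (Fin M) ℝ => A.rank) (D i)) ∧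
    (¬ ∃ D : Fin (min N M) → Set (Matrix (Fin N) (Fin M) ℝ),
      (⋃ i, D i) = Set.univ ∧
      ∀ i, ContinuousOn (fun A : Matrix (Fin N) (Fin M) ℝ => A.rank) (D i)) ∧
    IsLeast {k : ℕ | ∃ D : Fin k → Set (Matrix (Fin N) (Fin M) ℝ),
      (⋃ i, D i) = Set.univ ∧
      ∀ i, ContinuousOn (fun A : Matrix (Fin N) (Fin M) ℝ => A.rank) (D i)}
      (min N M + 1) :=
  rank_exactly_d_plus_one_continuous_general N M
end

section
/- Define f : [0,1] → ℝ by f(x) = x for x ∈ ℚ ∩ [0,1), f(x) = x − 1 for irrational x ∈ [0,1], and f(1) = 0. Then: (i) f is 2-continuous (it is continuous on ℚ ∩ [0,1) and on its complement in [0,1]); but (ii) the induced function f̃ on the circle ℝ/ℤ (with the quotient topology), defined by f̃(x mod 1) = f(x) for x ∈ [0,1), is well defined and is NOT 2-continuous: for every two sets D_1, D_2 covering the circle, the restriction of f̃ to at least one of D_1, D_2 is discontinuous. -/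
/-!
Let `F x = g (x mod 1)` and let `P, Q ⊆ ℝ` be the preimages of the two pieces. On `(0,1)`, `F`
jumps by `1` between rationals and irrationals, so continuity of `F` on `P` forces points of `P`
near a point of `P ∩ (0,1)` to have its rationality, and likewise for `Q`. Since the rationals and
the irrationals are both dense, near every point of `(0,1)` one piece is exactly the irrationals
and the other exactly the rationals; by connectedness of `(0,1)` the same piece does so on all of
`(0,1)`. The point `0 = 1` of the circle lies in a piece: in the irrational one, `F → -1` along
irrationals `x → 0⁺` while `F 0 = 0`; in the rational one, `F → 1` along rationals `x → 1⁻` while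
`F 1 = 0`.
-/

open scoped Classical

open Set Filter Topology

section Topology

variable {X : Type*} [TopologicalSpace X] {U P Q S : Set X}

theorem eventually_mem_iff_and_mem_iff_not_mem_of_mem (hU : IsOpen U) (hcov : U ⊆ P ∪ Q)
    (hS : Dense Sᶜ)
    (hP : ∀ x ∈ P ∩ U, ∀ᶠ y in 𝓝[P] x, (y ∈ S ↔ x ∈ S))
    (hQ : ∀ x ∈ Q ∩ U, ∀ᶠ y in 𝓝[Q] x, (y ∈ S ↔ x ∈ S))
    {c : X} (hc : c ∈ P ∩ U) (hcS : c ∈ S) :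
    ∀ᶠ y in 𝓝 c, (y ∈ P ↔ y ∈ S) ∧ (y ∈ Q ↔ y ∉ S) := by
  have hcU : ∀ᶠ y in 𝓝 c, y ∈ U := hU.mem_nhds hc.2
  have hPS : ∀ᶠ y in 𝓝 c, y ∈ P → y ∈ S :=
    (eventually_nhdsWithin_iff.1 (hP c hc)).mono fun y h hy => (h hy).2 hcS
  have hSQ : ∀ᶠ y in 𝓝 c, y ∉ S → y ∈ Q :=
    (hPS.and hcU).mono fun y h hyS => (hcov h.2).resolve_left (mt h.1 hyS)
  have hQS : ∀ᶠ y in 𝓝 c, y ∈ Q → y ∉ S := by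
    filter_upwards [hcU, eventually_eventually_nhds.2 hSQ] with y hyU hy hyQ hyS
    -- otherwise `S` would be a neighbourhood of `y`, as `Q ⊆ S` near `y` and `Sᶜ ⊆ Q` near `c`
    have hSy : S ∈ 𝓝 y := by
      filter_upwards [eventually_nhdsWithin_iff.1 (hQ y ⟨hyQ, hyU⟩), hy] with z hzQ hzS
      by_contra hz
      exact hz ((hzQ (hzS hz)).2 hyS)
    have : y ∈ interior S := mem_interior_iff_mem_nhds.2 hSy
    rwa [interior_eq_empty_iff_dense_compl.2 hS] at this
  filter_upwards [hPS, hSQ, hQS, hcU] with y hyPS hySQ hyQS hyU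
  exact ⟨⟨hyPS, fun hyS => (hcov hyU).resolve_right fun hyQ => hyQS hyQ hyS⟩, hyQS, hySQ⟩

theorem IsPreconnected.forall_mem_iff_or_forall_mem_iff (hU : IsOpen U) (hU' : IsPreconnected U)
    (hcov : U ⊆ P ∪ Q) (hS : Dense S) (hS' : Dense Sᶜ)
    (hP : ∀ x ∈ P ∩ U, ∀ᶠ y in 𝓝[P] x, (y ∈ S ↔ x ∈ S))
    (hQ : ∀ x ∈ Q ∩ U, ∀ᶠ y in 𝓝[Q] x, (y ∈ S ↔ x ∈ S)) :
    (∀ y ∈ U, (y ∈ P ↔ y ∈ S) ∧ (y ∈ Q ↔ y ∉ S)) ∨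
      (∀ y ∈ U, (y ∈ Q ↔ y ∈ S) ∧ (y ∈ P ↔ y ∉ S)) := by
  have hPc : ∀ x ∈ P ∩ U, ∀ᶠ y in 𝓝[P] x, (y ∈ Sᶜ ↔ x ∈ Sᶜ) :=
    fun x hx => (hP x hx).mono fun _ => not_congr
  have hQc : ∀ x ∈ Q ∩ U, ∀ᶠ y in 𝓝[Q] x, (y ∈ Sᶜ ↔ x ∈ Sᶜ) :=
    fun x hx => (hQ x hx).mono fun _ => not_congr
  have hS'' : Dense Sᶜᶜ := by rwa [compl_compl]
  have hcov' : U ⊆ Q ∪ P := union_comm P Q ▸ hcov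
  set A := {c | ∀ᶠ y in 𝓝 c, (y ∈ P ↔ y ∈ S) ∧ (y ∈ Q ↔ y ∉ S)}
  set B := {c | ∀ᶠ y in 𝓝 c, (y ∈ Q ↔ y ∈ S) ∧ (y ∈ P ↔ y ∉ S)}
  have hAB : Disjoint A B := disjoint_left.2 fun c hA hB => by
    have := hA.self_of_nhds.1.symm.trans hB.self_of_nhds.2
    tauto
  have hUAB : U ⊆ A ∪ B := by
    intro c hc
    rcases hcov hc with hcP | hcQ <;> by_cases hcS : c ∈ S
    · exact .inl (eventually_mem_iff_and_mem_iff_not_mem_of_mem hU hcov hS' hP hQ ⟨hcP, hc⟩ hcS)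
    · refine .inr ((eventually_mem_iff_and_mem_iff_not_mem_of_mem hU hcov hS'' hPc hQc
        ⟨hcP, hc⟩ hcS).mono fun _ => ?_)
      simpa only [mem_compl_iff, not_not] using And.symm
    · exact .inr (eventually_mem_iff_and_mem_iff_not_mem_of_mem hU hcov' hS' hQ hP ⟨hcQ, hc⟩ hcS)
    · refine .inl ((eventually_mem_iff_and_mem_iff_not_mem_of_mem hU hcov' hS'' hQc hPc
        ⟨hcQ, hc⟩ hcS).mono fun _ => ?_)
      simpa only [mem_compl_iff, not_not] using And.symm
  exact (hU'.subset_or_subset isOpen_setOfPred_eventually_nhds isOpen_setOfPred_eventually_nhds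
    hAB hUAB).imp (fun h y hy => (h hy).self_of_nhds) fun h y hy => (h hy).self_of_nhds


theorem ContinuousWithinAt.eq_of_eqOn_of_mem_closure {Y : Type*} [TopologicalSpace Y] [T2Space Y]
    {F G : X → Y} {E T : Set X} {x : X}
    (hF : ContinuousWithinAt F E x) (hG : ContinuousAt G x) (hTE : T ⊆ E) (hFG : EqOn F G T)
    (hx : x ∈ closure T) : F x = G x :=
  haveI := mem_closure_iff_nhdsWithin_neBot.1 hx
  tendsto_nhds_unique (hF.mono hTE).tendsto
    ((hG.tendsto.mono_left nhdsWithin_le_nhds).congr' (eventuallyEq_nhdsWithin_of_eqOn hFG).symm)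

end Topology

theorem Dense.Icc_subset_closure_inter_Ioo {S : Set ℝ} (hS : Dense S) {a b : ℝ} (hab : a ≠ b) :
    Icc a b ⊆ closure (Ioo a b ∩ S) := by
  rw [← closure_Ioo hab]
  exact closure_minimal (hS.open_subset_closure_inter isOpen_Ioo) isClosed_closure

theorem dense_compl_setOf_irrational : Dense {x : ℝ | Irrational x}ᶜ := by
  have : {x : ℝ | Irrational x}ᶜ = range ((↑) : ℚ → ℝ) := by
    ext x
    simp [Irrational]
  exact this ▸ Rat.denseRange_cast

theorem ContinuousOn.comp_coe_addCircle {p : ℝ} {Y : Type*} [TopologicalSpace Y]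
    {D : Set (AddCircle p)} {g : AddCircle p → Y} (h : ContinuousOn g D) :
    ContinuousOn (fun x : ℝ => g x) ((↑) ⁻¹' D) :=
  h.comp (AddCircle.continuous_mk' p).continuousOn (mapsTo_preimage _ _)

noncomputable def shiftIrrational (x : ℝ) : ℝ :=
  if Irrational x then x - 1 else if x = 1 then 0 else x

noncomputable def circleShift : AddCircle (1 : ℝ) → ℝ :=
  AddCircle.liftIco 1 0 shiftIrrational

theorem shiftIrrational_of_mem_Ico {x : ℝ} (hx : x ∈ Ico (0 : ℝ) 1) :
    shiftIrrational x = if Irrational x then x - 1 else x := by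
  simp [shiftIrrational, hx.2.ne]

theorem exists_two_pieces_continuousOn_shiftIrrational :
    ∃ D : Fin 2 → Set ℝ, (⋃ i, D i) = Icc 0 1 ∧ ∀ i, ContinuousOn shiftIrrational (D i) := by
  set R := {x : ℝ | ¬Irrational x} ∩ Ico 0 1
  have hR : R ⊆ Icc 0 1 := fun x hx => Ico_subset_Icc_self hx.2
  have hRcont : ContinuousOn shiftIrrational R := continuousOn_id.congr fun x hx => by
    rw [shiftIrrational_of_mem_Ico hx.2, if_neg hx.1, id]
  have hRcompl : ContinuousOn shiftIrrational (Icc 0 1 \ R) :=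
    (continuousOn_id.sub (continuousOn_const (c := 1))).congr fun x hx => by
      by_cases hirr : Irrational x
      · simp [shiftIrrational, hirr]
      · have : x = 1 := hx.1.2.eq_of_not_lt fun h => hx.2 ⟨hirr, hx.1.1, h⟩
        simp [shiftIrrational, this]
  refine ⟨![R, Icc 0 1 \ R], ?_, Fin.forall_fin_two.2 ⟨hRcont, hRcompl⟩⟩
  convert union_sdiff_cancel hR using 1
  ext x
  simp only [mem_iUnion, Fin.exists_fin_two, Matrix.cons_val_zero, Matrix.cons_val_one,
    mem_union]

theorem circleShift_coe {x : ℝ} (hx : x ∈ Ico (0 : ℝ) 1) : circleShift x = shiftIrrational x :=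
  AddCircle.liftIco_zero_coe_apply hx

theorem circleShift_coe_eq_ite {x : ℝ} (hx : x ∈ Ico (0 : ℝ) 1) :
    circleShift x = if Irrational x then x - 1 else x := by
  rw [circleShift_coe hx, shiftIrrational_of_mem_Ico hx]

theorem circleShift_zero : circleShift 0 = 0 := by
  simpa using circleShift_coe_eq_ite (x := 0) ⟨le_rfl, zero_lt_one⟩

theorem eventually_irrational_iff_of_continuousWithinAt {F : ℝ → ℝ} {E : Set ℝ} {x : ℝ}
    (hF : ∀ y ∈ Ioo (0 : ℝ) 1, F y = if Irrational y then y - 1 else y) (hx : x ∈ Ioo (0 : ℝ) 1)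
    (h : ContinuousWithinAt F E x) : ∀ᶠ y in 𝓝[E] x, (Irrational y ↔ Irrational x) := by
  have hnear : ∀ᶠ y in 𝓝[E] x, y ∈ Ioo (0 : ℝ) 1 ∧ |y - x| < 1 / 2 :=
    nhdsWithin_le_nhds (Filter.Eventually.and (isOpen_Ioo.mem_nhds hx)
      (Metric.ball_mem_nhds x (by norm_num : (0 : ℝ) < 1 / 2)))
  filter_upwards [hnear, h (Metric.ball_mem_nhds (F x) (by norm_num : (0 : ℝ) < 1 / 2))]
    with y ⟨hy, hyx⟩ hFy
  rw [mem_preimage, Metric.mem_ball, Real.dist_eq, hF y hy, hF x hx] at hFy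
  by_cases hyi : Irrational y <;> by_cases hxi : Irrational x <;>
    simp only [hyi, hxi, if_true, if_false] at hFy ⊢ <;>
    rw [abs_lt] at hFy hyx <;> constructor <;> linarith

theorem false_of_continuousOn_circleShift {D₁ D₂ : Set (AddCircle (1 : ℝ))}
    (hD : D₁ ∪ D₂ = univ) (h₁ : ContinuousOn circleShift D₁) (h₂ : ContinuousOn circleShift D₂)
    (hirr : ∀ y ∈ Ioo (0 : ℝ) 1, Irrational y → (y : AddCircle (1 : ℝ)) ∈ D₁)
    (hrat : ∀ y ∈ Ioo (0 : ℝ) 1, ¬Irrational y → (y : AddCircle (1 : ℝ)) ∈ D₂) : False := by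
  have h0 : ((0 : ℝ) : AddCircle (1 : ℝ)) ∈ D₁ ∪ D₂ := hD ▸ mem_univ _
  rcases h0 with h0 | h0
  · have := (h₁.comp_coe_addCircle 0 h0).eq_of_eqOn_of_mem_closure (G := fun x => x - 1)
      (by fun_prop) (fun y hy => hirr y hy.1 hy.2)
      (fun y hy => by
        simp [circleShift_coe_eq_ite (Ioo_subset_Ico_self hy.1), show Irrational y from hy.2])
      (dense_irrational.Icc_subset_closure_inter_Ioo zero_ne_one ⟨le_rfl, zero_le_one⟩)
    simp [circleShift_zero] at this
  · have h1 : ((1 : ℝ) : AddCircle (1 : ℝ)) ∈ D₂ := by rwa [AddCircle.coe_period]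
    have := (h₂.comp_coe_addCircle 1 h1).eq_of_eqOn_of_mem_closure continuousAt_id
      (fun y hy => hrat y hy.1 hy.2)
      (fun y hy => by
        simp [circleShift_coe_eq_ite (Ioo_subset_Ico_self hy.1), show ¬Irrational y from hy.2])
      (dense_compl_setOf_irrational.Icc_subset_closure_inter_Ioo zero_ne_one ⟨zero_le_one, le_rfl⟩)
    simp [AddCircle.coe_period, circleShift_zero] at this

theorem not_continuousOn_circleShift_of_union_eq_univ {D₁ D₂ : Set (AddCircle (1 : ℝ))}
    (hD : D₁ ∪ D₂ = univ) : ¬ContinuousOn circleShift D₁ ∨ ¬ContinuousOn circleShift D₂ := by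
  rw [← not_and_or]
  rintro ⟨h₁, h₂⟩
  have hloc : ∀ {D : Set (AddCircle (1 : ℝ))}, ContinuousOn circleShift D →
      ∀ x ∈ (↑) ⁻¹' D ∩ Ioo 0 1, ∀ᶠ y in 𝓝[(↑) ⁻¹' D] x,
        (y ∈ {x : ℝ | Irrational x} ↔ x ∈ {x : ℝ | Irrational x}) :=
    fun h x hx => eventually_irrational_iff_of_continuousWithinAt
      (fun y hy => circleShift_coe_eq_ite (Ioo_subset_Ico_self hy)) hx.2
      (h.comp_coe_addCircle x hx.1)
  have hcov : Ioo (0 : ℝ) 1 ⊆ (↑) ⁻¹' D₁ ∪ (↑) ⁻¹' D₂ := by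
    rw [← preimage_union, hD, preimage_univ]
    exact subset_univ _
  rcases isPreconnected_Ioo.forall_mem_iff_or_forall_mem_iff isOpen_Ioo hcov dense_irrational
    dense_compl_setOf_irrational (hloc h₁) (hloc h₂) with h | h
  · exact false_of_continuousOn_circleShift hD h₁ h₂ (fun y hy => (h y hy).1.2)
      fun y hy => (h y hy).2.2
  · exact false_of_continuousOn_circleShift ((union_comm _ _).trans hD) h₂ h₁
      (fun y hy => (h y hy).1.2) fun y hy => (h y hy).2.2

/-- The function `f : [0,1] → ℝ` with `f(x) = x` for rational `x ∈ [0,1)`,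
`f(x) = x - 1` for irrational `x`, and `f(1) = 0`, is `2`-continuous on `[0,1]`;
but the induced well-defined function on the circle `ℝ/ℤ` is not `2`-continuous. -/
theorem two_continuity_lost_on_circle :
    letI f : ℝ → ℝ := fun x => if Irrational x then x - 1 else if x = 1 then 0 else x
    (∃ D : Fin 2 → Set ℝ, (⋃ i, D i) = Set.Icc (0:ℝ) 1 ∧ ∀ i, ContinuousOn f (D i)) ∧
    ∃ g : AddCircle (1:ℝ) → ℝ,
      (∀ x : ℝ, x ∈ Set.Ico (0:ℝ) 1 → g ((x : ℝ) : AddCircle (1:ℝ)) = f x) ∧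
      ∀ D₁ D₂ : Set (AddCircle (1:ℝ)), D₁ ∪ D₂ = Set.univ →
        ¬ ContinuousOn g D₁ ∨ ¬ ContinuousOn g D₂ :=
  ⟨exists_two_pieces_continuousOn_shiftIrrational, circleShift, fun _ => circleShift_coe,
    fun _ _ => not_continuousOn_circleShift_of_union_eq_univ⟩
end

section
/- Let n, m ≥ 1 and let A : ℝ^m → ℝ^n be a linear map of rank r < min(n, m). Then there exist linear subspaces V_1, …, V_{m−r} of ℝ^m with V_1 ∩ … ∩ V_{m−r} = {0} such that for every δ > 0 there exist linear maps A^{(1)}, …, A^{(m−r)} : ℝ^m → ℝ^n with rank A^{(i)} = r + 1, operator norm ‖A^{(i)} − A‖ ≤ δ, and kernel(A^{(i)}) = V_i for each i = 1, …, m−r. -/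
/-!
Let `K = ker A`, of dimension `m - r`, with orthonormal basis `e₁, …, e_{m-r}`, and pick `w` of
norm `δ` outside `range A`, which is possible since `r < n`. The rank-one perturbation
`A⁽ⁱ⁾ = A + ⟪eᵢ, ·⟫ w` is at distance `‖eᵢ‖ ‖w‖ = δ` from `A`. Because `w ∉ range A`, a vector
is killed by `A⁽ⁱ⁾` only if it is killed by both `A` and `⟪eᵢ, ·⟫`, so `ker A⁽ⁱ⁾ = K ⊓ eᵢᗮ`,
which does not depend on `δ`; and `A⁽ⁱ⁾ eᵢ = w` gives `range A⁽ⁱ⁾ = range A ⊕ ℝ w`. The kernels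
intersect in `K ⊓ Kᗮ = 0`.
-/

open Module Submodule LinearMap

section RankOnePerturbation

variable {𝕜 E F : Type*} [DivisionRing 𝕜] [AddCommGroup E] [Module 𝕜 E] [AddCommGroup F]
  [Module 𝕜 F] (f : E →ₗ[𝕜] F) (φ : E →ₗ[𝕜] 𝕜) {w : F}

theorem LinearMap.ker_add_smulRight_of_notMem_range (hw : w ∉ range f) :
    ker (f + φ.smulRight w) = ker f ⊓ ker φ := by
  ext x
  simp only [mem_ker, mem_inf, add_apply, smulRight_apply]
  refine ⟨fun hx => ?_, fun ⟨hfx, hφx⟩ => by simp [hfx, hφx]⟩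
  have hφx : φ x = 0 := by
    by_contra hφx
    refine hw ⟨(-φ x)⁻¹ • x, ?_⟩
    rw [map_smul, eq_neg_of_add_eq_zero_left hx, ← neg_smul, smul_smul,
      inv_mul_cancel₀ (neg_ne_zero.2 hφx), one_smul]
  exact ⟨by simpa [hφx] using hx, hφx⟩

theorem LinearMap.range_add_smulRight {x : E} (hfx : f x = 0) (hφx : φ x ≠ 0) :
    range (f + φ.smulRight w) = range f ⊔ 𝕜 ∙ w := by
  have hw : w ∈ range (f + φ.smulRight w) :=
    ⟨(φ x)⁻¹ • x, by simp [hfx, smul_smul, inv_mul_cancel₀ hφx]⟩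
  refine le_antisymm ?_ (sup_le ?_ ((span_singleton_le_iff_mem _ _).2 hw))
  · rintro _ ⟨y, rfl⟩
    exact add_mem_sup (mem_range_self f y) (smul_mem _ _ (mem_span_singleton_self w))
  · rintro _ ⟨y, rfl⟩
    have hfy : f y = (f + φ.smulRight w) y - φ y • w := by simp
    rw [hfy]
    exact sub_mem (mem_range_self _ y) (smul_mem _ _ hw)

theorem LinearMap.finrank_range_add_smulRight [FiniteDimensional 𝕜 F] (hw : w ∉ range f)
    {x : E} (hfx : f x = 0) (hφx : φ x ≠ 0) :
    finrank 𝕜 (range (f + φ.smulRight w)) = finrank 𝕜 (range f) + 1 := by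
  rw [range_add_smulRight f φ hfx hφx, finrank_sup_span_singleton hw]

end RankOnePerturbation

theorem Submodule.exists_norm_eq_notMem_of_ne_top {E : Type*} [NormedAddCommGroup E]
    [NormedSpace ℝ E] {p : Submodule ℝ E} (hp : p ≠ ⊤) {δ : ℝ} (hδ : 0 < δ) :
    ∃ w ∉ p, ‖w‖ = δ := by
  obtain ⟨v, -, hv⟩ := SetLike.exists_of_lt hp.lt_top
  have hv0 : ‖v‖ ≠ 0 := norm_ne_zero_iff.2 fun h => hv (h ▸ p.zero_mem)
  refine ⟨(δ / ‖v‖) • v, ?_, ?_⟩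
  · rwa [smul_mem_iff _ (div_ne_zero hδ.ne' hv0)]
  · rw [norm_smul, Real.norm_of_nonneg (by positivity), div_mul_cancel₀ _ hv0]

theorem OrthonormalBasis.iInf_inf_orthogonal_eq_bot {𝕜 E ι : Type*} [RCLike 𝕜]
    [NormedAddCommGroup E] [InnerProductSpace 𝕜 E] [Fintype ι] [Nonempty ι]
    {K : Submodule 𝕜 E} (b : OrthonormalBasis ι 𝕜 K) :
    ⨅ i, K ⊓ (𝕜 ∙ (b i : E))ᗮ = ⊥ := by
  have hspan : ⨆ i, 𝕜 ∙ (b i : E) = K := by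
    rw [iSup_span, Set.iUnion_singleton_eq_range, Set.range_comp', ← K.coe_subtype, span_image,
      ← b.coe_toBasis, b.toBasis.span_eq, map_subtype_top]
  rw [← Submodule.inf_iInf, iInf_orthogonal, hspan, inf_orthogonal_eq_bot]

theorem rank_one_perturbations_with_prescribed_kernels_general
    (n m : ℕ)
    (A : EuclideanSpace ℝ (Fin m) →L[ℝ] EuclideanSpace ℝ (Fin n)) (r : ℕ)
    (hr : Module.finrank ℝ (LinearMap.range (A : EuclideanSpace ℝ (Fin m) →ₗ[ℝ] EuclideanSpace ℝ (Fin n))) = r) (hlt : r < min n m) :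
    ∃ V : Fin (m - r) → Submodule ℝ (EuclideanSpace ℝ (Fin m)),
      (⨅ i, V i) = ⊥ ∧
      ∀ δ : ℝ, 0 < δ →
        ∃ B : Fin (m - r) → (EuclideanSpace ℝ (Fin m) →L[ℝ] EuclideanSpace ℝ (Fin n)),
          ∀ i, Module.finrank ℝ (LinearMap.range (B i : EuclideanSpace ℝ (Fin m) →ₗ[ℝ] EuclideanSpace ℝ (Fin n))) = r + 1 ∧
            ‖B i - A‖ ≤ δ ∧ LinearMap.ker (B i : EuclideanSpace ℝ (Fin m) →ₗ[ℝ] EuclideanSpace ℝ (Fin n)) = V i := by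
  have hK : finrank ℝ (ker (A : EuclideanSpace ℝ (Fin m) →ₗ[ℝ] EuclideanSpace ℝ (Fin n))) =
      m - r := by
    have := finrank_range_add_finrank_ker
      (A : EuclideanSpace ℝ (Fin m) →ₗ[ℝ] EuclideanSpace ℝ (Fin n))
    rw [finrank_euclideanSpace_fin, hr] at this
    omega
  set K := ker (A : EuclideanSpace ℝ (Fin m) →ₗ[ℝ] EuclideanSpace ℝ (Fin n))
  have hA : range (A : EuclideanSpace ℝ (Fin m) →ₗ[ℝ] EuclideanSpace ℝ (Fin n)) ≠ ⊤ := fun h => by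
    rw [h, finrank_top, finrank_euclideanSpace_fin] at hr
    omega
  have : Nonempty (Fin (m - r)) := ⟨⟨0, by omega⟩⟩
  let e := (stdOrthonormalBasis ℝ K).reindex (finCongr hK)
  refine ⟨fun i => K ⊓ (ℝ ∙ (e i : EuclideanSpace ℝ (Fin m)))ᗮ, e.iInf_inf_orthogonal_eq_bot,
    fun δ hδ => ?_⟩
  obtain ⟨w, hw, hwδ⟩ := exists_norm_eq_notMem_of_ne_top hA hδ
  refine ⟨fun i => A + (innerSL ℝ (e i : EuclideanSpace ℝ (Fin m))).smulRight w,
    fun i => ⟨?_, ?_, ?_⟩⟩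
  · refine (finrank_range_add_smulRight _ _ hw (e i).2 ?_).trans (congrArg (· + 1) hr)
    simpa using e.orthonormal.ne_zero i
  · rw [add_sub_cancel_left, ContinuousLinearMap.norm_smulRight_apply, innerSL_apply_norm, hwδ,
      norm_coe, e.norm_eq_one, one_mul]
  · refine (ker_add_smulRight_of_notMem_range _ _ hw).trans (congrArg (K ⊓ ·) ?_)
    ext x
    simp [mem_orthogonal_singleton_iff_inner_right]

/-- Given a linear map `A : ℝ^m → ℝ^n` of rank `r < min n m`, there are subspaces
`V_1, …, V_{m-r}` of `ℝ^m` intersecting in `{0}` such that for every `δ > 0` there are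
linear maps `A⁽ⁱ⁾` of rank `r + 1`, operator-norm distance at most `δ` from `A`,
and kernel exactly `V_i`. -/
theorem rank_one_perturbations_with_prescribed_kernels
    (n m : ℕ) (hn : 1 ≤ n) (hm : 1 ≤ m)
    (A : EuclideanSpace ℝ (Fin m) →L[ℝ] EuclideanSpace ℝ (Fin n)) (r : ℕ)
    (hr : Module.finrank ℝ (LinearMap.range (A : EuclideanSpace ℝ (Fin m) →ₗ[ℝ] EuclideanSpace ℝ (Fin n))) = r) (hlt : r < min n m) :
    ∃ V : Fin (m - r) → Submodule ℝ (EuclideanSpace ℝ (Fin m)),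
      (⨅ i, V i) = ⊥ ∧
      ∀ δ : ℝ, 0 < δ →
        ∃ B : Fin (m - r) → (EuclideanSpace ℝ (Fin m) →L[ℝ] EuclideanSpace ℝ (Fin n)),
          ∀ i, Module.finrank ℝ (LinearMap.range (B i : EuclideanSpace ℝ (Fin m) →ₗ[ℝ] EuclideanSpace ℝ (Fin n))) = r + 1 ∧
            ‖B i - A‖ ≤ δ ∧ LinearMap.ker (B i : EuclideanSpace ℝ (Fin m) →ₗ[ℝ] EuclideanSpace ℝ (Fin n)) = V i :=
  rank_one_perturbations_with_prescribed_kernels_general n m A r hr hlt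
end

section
/- Let X and Y be closed subsets of ℝ^n with X compact, and let δ > 0. Then there exists ε > 0 such that B(X,ε) ∩ B(Y,ε) ⊆ B(X ∩ Y, δ), where B(S,ε) = {x ∈ ℝ^n : there exists s ∈ S with ‖x − s‖ < ε} denotes the open ε-thickening of S (so B(∅,ε) = ∅). -/
/-- For closed `X, Y ⊆ ℝⁿ` with `X` compact and any `δ > 0`, there is `ε > 0` such that
the open `ε`-thickenings satisfy `B(X,ε) ∩ B(Y,ε) ⊆ B(X ∩ Y, δ)`. -/
theorem thickening_inter_subset_thickening_of_inter
    (n : ℕ) (X Y : Set (EuclideanSpace ℝ (Fin n)))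
    (hXclosed : IsClosed X) (hXcompact : IsCompact X) (hYclosed : IsClosed Y)
    (δ : ℝ) (hδ : 0 < δ) :
    ∃ ε : ℝ, 0 < ε ∧
      Metric.thickening ε X ∩ Metric.thickening ε Y ⊆ Metric.thickening δ (X ∩ Y) := by
  by_contra h
  push_neg at h
  have hseq : ∀ k : ℕ, ∃ x : EuclideanSpace ℝ (Fin n),
      x ∈ Metric.thickening (1/(k+1)) X ∧ x ∈ Metric.thickening (1/(k+1)) Y ∧
      x ∉ Metric.thickening δ (X ∩ Y) := by
    intro k
    obtain ⟨x, hx, hnx⟩ := Set.not_subset.1 (h (1/(k+1)) (by positivity))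
    exact ⟨x, hx.1, hx.2, hnx⟩
  choose x hx1 hx2 hx3 using hseq
  have hXne : X.Nonempty := by
    obtain ⟨s, hs, -⟩ := Metric.mem_thickening_iff.1 (hx1 0)
    exact ⟨s, hs⟩
  have hYne : Y.Nonempty := by
    obtain ⟨s, hs, -⟩ := Metric.mem_thickening_iff.1 (hx2 0)
    exact ⟨s, hs⟩
  have hK : IsCompact (Metric.cthickening 1 X) := hXcompact.cthickening
  have hle : ∀ k : ℕ, (1 : ℝ)/(k+1) ≤ 1 := by
    intro k
    rw [div_le_one (by positivity)]
    linarith [Nat.cast_nonneg (α := ℝ) k]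
  have hxK : ∀ k, x k ∈ Metric.cthickening 1 X := fun k =>
    Metric.thickening_subset_cthickening_of_le (hle k) _ (hx1 k)
  obtain ⟨z, hz, φ, hφ, hconv⟩ := hK.tendsto_subseq hxK
  have htend0 : Filter.Tendsto (fun k : ℕ => (1 : ℝ)/(φ k + 1)) Filter.atTop (nhds 0) := by
    apply tendsto_one_div_add_atTop_nhds_zero_nat.comp
    exact hφ.tendsto_atTop
  have hdX : Filter.Tendsto (fun k => Metric.infDist (x (φ k)) X) Filter.atTop
      (nhds (Metric.infDist z X)) :=
    ((Metric.continuous_infDist_pt X).continuousAt.tendsto).comp hconv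
  have hdY : Filter.Tendsto (fun k => Metric.infDist (x (φ k)) Y) Filter.atTop
      (nhds (Metric.infDist z Y)) :=
    ((Metric.continuous_infDist_pt Y).continuousAt.tendsto).comp hconv
  have hzX : z ∈ X := by
    have : Metric.infDist z X ≤ 0 := by
      refine le_of_tendsto_of_tendsto hdX htend0 ?_
      filter_upwards with k
      exact le_of_lt ((Metric.mem_thickening_iff_infDist_lt hXne).1 (hx1 (φ k)))
    have h0 : Metric.infDist z X = 0 := le_antisymm this (Metric.infDist_nonneg)
    exact ((hXclosed.mem_iff_infDist_zero hXne)).2 h0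
  have hzY : z ∈ Y := by
    have : Metric.infDist z Y ≤ 0 := by
      refine le_of_tendsto_of_tendsto hdY htend0 ?_
      filter_upwards with k
      exact le_of_lt ((Metric.mem_thickening_iff_infDist_lt hYne).1 (hx2 (φ k)))
    have h0 : Metric.infDist z Y = 0 := le_antisymm this (Metric.infDist_nonneg)
    exact ((hYclosed.mem_iff_infDist_zero hYne)).2 h0
  have hXYne : (X ∩ Y).Nonempty := ⟨z, hzX, hzY⟩
  have hdXY : Filter.Tendsto (fun k => Metric.infDist (x (φ k)) (X ∩ Y)) Filter.atTop
      (nhds (Metric.infDist z (X ∩ Y))) :=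
    ((Metric.continuous_infDist_pt (X ∩ Y)).continuousAt.tendsto).comp hconv
  have hge : δ ≤ Metric.infDist z (X ∩ Y) := by
    refine ge_of_tendsto hdXY ?_
    filter_upwards with k
    by_contra hlt
    push_neg at hlt
    exact hx3 (φ k) ((Metric.mem_thickening_iff_infDist_lt hXYne).2 hlt)
  have : Metric.infDist z (X ∩ Y) = 0 := Metric.infDist_zero_of_mem ⟨hzX, hzY⟩
  linarith
end

section
/- Fix n, m ∈ ℕ with m ≥ 1 and let d = min(n, m−1). Let S = {A ∈ ℝ^{n×m} : rank A ≤ d}, and consider the multivalued map LinEq with domain S defined by LinEq(A) = {x ∈ ℝ^m : x ≠ 0 and A·x = 0} (which is nonempty for every A ∈ S). Then LinEq is not d-continuous as a multivalued map: for every family of sets D_1, …, D_d with S = D_1 ∪ … ∪ D_d, there exist an index i and a matrix A ∈ D_i such that LinEq is not continuous at A relative to D_i. -/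
/-- A multivalued map `F` is continuous at `x` relative to `D` if there is some
`y ∈ F x` such that every open neighbourhood `V` of `y` admits an open neighbourhood
`U` of `x` with `F z ∩ V ≠ ∅` for all `z ∈ U ∩ D`. -/
def MVContinuousAt {X Y : Type*} [TopologicalSpace X] [TopologicalSpace Y]
    (F : X → Set Y) (D : Set X) (x : X) : Prop :=
  ∃ y ∈ F x, ∀ V : Set Y, IsOpen V → y ∈ V →
    ∃ U : Set X, IsOpen U ∧ x ∈ U ∧ ∀ z ∈ U ∩ D, (F z ∩ V).Nonempty

namespace LinEqAux


open Matrix Module Submodule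

variable {n' m' : ℕ}

/-- Embed an `n' × m'` matrix into `(n'+1) × (m'+1)` matrices: first row is `t • y`,
and the remaining rows are the rows of `B` with a `0` inserted at column `j`. -/
def iotaM (t : ℝ) (y : Fin (m' + 1) → ℝ) (j : Fin (m' + 1))
    (B : Matrix (Fin n') (Fin m') ℝ) : Matrix (Fin (n' + 1)) (Fin (m' + 1)) ℝ :=
  Matrix.of (Fin.cons (t • y) fun r => j.insertNth 0 (B r))

/-- Delete the `j`-th coordinate of a vector. -/
def proj (j : Fin (m' + 1)) (x : Fin (m' + 1) → ℝ) : Fin m' → ℝ :=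
  fun k => x (j.succAbove k)

lemma mulVec_iotaM_zero (t : ℝ) (y : Fin (m' + 1) → ℝ) (j : Fin (m' + 1))
    (B : Matrix (Fin n') (Fin m') ℝ) (x : Fin (m' + 1) → ℝ) :
    (iotaM t y j B).mulVec x 0 = t * (y ⬝ᵥ x) := by
  simp [iotaM, Matrix.mulVec, dotProduct, Finset.mul_sum, mul_assoc]

lemma mulVec_iotaM_succ (t : ℝ) (y : Fin (m' + 1) → ℝ) (j : Fin (m' + 1))
    (B : Matrix (Fin n') (Fin m') ℝ) (x : Fin (m' + 1) → ℝ) (r : Fin n') :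
    (iotaM t y j B).mulVec x r.succ = B.mulVec (proj j x) r := by
  have h := Fin.sum_univ_succAbove (fun c => Fin.insertNth (α := fun _ => ℝ) j 0 (B r) c * x c) j
  simp only [Fin.insertNth_apply_same, Fin.insertNth_apply_succAbove, zero_mul, zero_add] at h
  simp only [iotaM, Matrix.mulVec, dotProduct, Matrix.of_apply, Fin.cons_succ]
  rw [h]
  simp [proj]

lemma continuous_iotaM (t : ℝ) (y : Fin (m' + 1) → ℝ) (j : Fin (m' + 1)) :
    Continuous fun B : Matrix (Fin n') (Fin m') ℝ => iotaM t y j B := by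
  apply continuous_pi; intro i
  apply continuous_pi; intro c
  refine Fin.cases ?_ ?_ i
  · exact continuous_const
  · intro r
    simp only [iotaM, Matrix.of_apply, Fin.cons_succ]
    rcases eq_or_ne c j with rfl | hc
    · simpa using continuous_const
    · obtain ⟨k, rfl⟩ := Fin.exists_succAbove_eq hc
      simp only [Fin.insertNth_apply_succAbove]
      exact (continuous_apply k).comp (continuous_apply r)

lemma continuous_proj (j : Fin (m' + 1)) : Continuous (proj (m' := m') j) :=
  continuous_pi fun k => continuous_apply _

lemma continuous_dot (y : Fin (m' + 1) → ℝ) : Continuous fun x : Fin (m' + 1) → ℝ => y ⬝ᵥ x := by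
  unfold dotProduct
  exact continuous_finset_sum _ fun i _ => continuous_const.mul (continuous_apply i)

def consZeroLin : (Fin n' → ℝ) →ₗ[ℝ] (Fin (n' + 1) → ℝ) where
  toFun v := Fin.cons 0 v
  map_add' u v := by
    funext i; refine Fin.cases ?_ ?_ i <;> simp
  map_smul' c v := by
    funext i; refine Fin.cases ?_ ?_ i <;> simp

lemma rank_iotaM_le (t : ℝ) (y : Fin (m' + 1) → ℝ) (j : Fin (m' + 1))
    (B : Matrix (Fin n') (Fin m') ℝ) :
    (iotaM t y j B).rank ≤ B.rank + 1 := by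
  classical
  set e : Fin (n' + 1) → ℝ := Fin.cons 1 0 with he
  have hsub : LinearMap.range (iotaM t y j B).mulVecLin ≤
      (span ℝ {e}) ⊔ (LinearMap.range B.mulVecLin).map consZeroLin := by
    rintro v ⟨x, rfl⟩
    have hv : (iotaM t y j B).mulVecLin x
        = (t * (y ⬝ᵥ x)) • e + consZeroLin (B.mulVec (proj j x)) := by
      funext i
      refine Fin.cases ?_ ?_ i
      · simp [Matrix.mulVecLin_apply, mulVec_iotaM_zero, consZeroLin, he]
      · intro r
        simp [Matrix.mulVecLin_apply, mulVec_iotaM_succ, consZeroLin, he]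
    rw [hv]
    exact add_mem (mem_sup_left (smul_mem _ _ (subset_span rfl)))
      (mem_sup_right ⟨B.mulVec (proj j x), ⟨proj j x, rfl⟩, rfl⟩)
  have h1 : (iotaM t y j B).rank
      ≤ finrank ℝ ((span ℝ {e}) ⊔ (LinearMap.range B.mulVecLin).map consZeroLin : Submodule ℝ _) :=
    Submodule.finrank_mono hsub
  have h2 := Submodule.finrank_add_le_finrank_add_finrank (span ℝ {e})
      ((LinearMap.range B.mulVecLin).map consZeroLin)
  have h3 : finrank ℝ (span ℝ {e}) = 1 := by
    apply finrank_span_singleton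
    intro h
    have := congrFun h 0
    simp [he] at this
  have h4 : finrank ℝ ((LinearMap.range B.mulVecLin).map consZeroLin) ≤ B.rank :=
    Submodule.finrank_map_le _ _
  calc (iotaM t y j B).rank ≤ _ := h1
    _ ≤ _ := h2
    _ ≤ 1 + B.rank := by omega
    _ = B.rank + 1 := by omega


end LinEqAux

open LinEqAux Matrix in
lemma linEq_key : ∀ d n m : ℕ, d ≤ n → d < m →
    ∀ W : Set (Matrix (Fin n) (Fin m) ℝ), IsOpen W → (0 : Matrix (Fin n) (Fin m) ℝ) ∈ W →
    ∀ D : Fin d → Set (Matrix (Fin n) (Fin m) ℝ),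
      ({A : Matrix (Fin n) (Fin m) ℝ | A.rank ≤ d} ∩ W ⊆ ⋃ i, D i) →
      ∃ i, ∃ A ∈ D i,
        ¬ MVContinuousAt
            (fun A : Matrix (Fin n) (Fin m) ℝ =>
              {x : Fin m → ℝ | x ≠ 0 ∧ A.mulVec x = 0}) (D i) A := by
  intro d
  induction d with
  | zero =>
    intro n m _ _ W _ hW0 D hcov
    have h0 : (0 : Matrix (Fin n) (Fin m) ℝ) ∈ {A : Matrix (Fin n) (Fin m) ℝ | A.rank ≤ 0} ∩ W :=
      ⟨by simp, hW0⟩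
    obtain ⟨i, -⟩ := Set.mem_iUnion.mp (hcov h0)
    exact i.elim0
  | succ k IH =>
    intro n m hdn hdm W hWopen hW0 D hcov
    by_contra hc
    push_neg at hc
    -- hc : ∀ i, ∀ A ∈ D i, MVContinuousAt F (D i) A
    obtain ⟨n', rfl⟩ : ∃ n', n = n' + 1 := ⟨n - 1, by omega⟩
    obtain ⟨m', rfl⟩ : ∃ m', m = m' + 1 := ⟨m - 1, by omega⟩
    have h0S : (0 : Matrix (Fin (n'+1)) (Fin (m'+1)) ℝ)
        ∈ {A : Matrix (Fin (n'+1)) (Fin (m'+1)) ℝ | A.rank ≤ k + 1} ∩ W := ⟨by simp, hW0⟩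
    obtain ⟨i₁, h0D⟩ := Set.mem_iUnion.mp (hcov h0S)
    obtain ⟨y₁, hy₁F, hy₁⟩ := hc i₁ 0 h0D
    have hy₁0 : y₁ ≠ 0 := hy₁F.1
    set V₁ : Set (Fin (m'+1) → ℝ) := {x | 0 < y₁ ⬝ᵥ x} with hV₁def
    have hV₁open : IsOpen V₁ := isOpen_lt continuous_const (continuous_dot y₁)
    have hy₁V : y₁ ∈ V₁ := by
      have h1 : y₁ ⬝ᵥ y₁ ≠ 0 := fun h => hy₁0 ((dotProduct_self_eq_zero).mp h)
      have h2 : 0 ≤ y₁ ⬝ᵥ y₁ := Finset.sum_nonneg fun i _ => mul_self_nonneg _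
      exact lt_of_le_of_ne h2 (Ne.symm h1)
    obtain ⟨U₁, hU₁open, hU₁0, hU₁⟩ := hy₁ V₁ hV₁open hy₁V
    obtain ⟨j, hj⟩ : ∃ j, y₁ j ≠ 0 := Function.ne_iff.mp hy₁0
    -- choose t > 0 with iotaM t y₁ j 0 ∈ W ∩ U₁
    have hWU : IsOpen (W ∩ U₁) := hWopen.inter hU₁open
    have hg : Continuous fun t : ℝ => iotaM (n' := n') t y₁ j 0 := by
      apply continuous_pi; intro i; apply continuous_pi; intro c
      refine Fin.cases ?_ ?_ i
      · show Continuous fun t : ℝ => t * y₁ c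
        exact continuous_id.mul continuous_const
      · intro r; exact continuous_const
    have hg0 : iotaM (n' := n') 0 y₁ j 0 = 0 := by
      funext i c
      refine Fin.cases ?_ ?_ i
      · simp [iotaM]
      · intro r
        rcases eq_or_ne c j with rfl | hcj
        · simp [iotaM]
        · obtain ⟨kk, rfl⟩ := Fin.exists_succAbove_eq hcj
          simp [iotaM]
    obtain ⟨δ, hδ0, hδ⟩ := Metric.isOpen_iff.mp (hWU.preimage hg) 0 (by
      show iotaM (n' := n') 0 y₁ j 0 ∈ W ∩ U₁
      rw [hg0]; exact ⟨hW0, hU₁0⟩)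
    set t : ℝ := δ / 2 with ht
    have ht0 : 0 < t := by positivity
    have htWU : iotaM (n' := n') t y₁ j 0 ∈ W ∩ U₁ := by
      apply hδ
      show dist t 0 < δ
      rw [Real.dist_eq, sub_zero, abs_of_pos ht0]
      rw [ht]; linarith
    set ι := iotaM (n' := n') t y₁ j with hι
    have hιcont : Continuous ι := continuous_iotaM t y₁ j
    -- kernel facts
    have hker : ∀ (B : Matrix (Fin n') (Fin m') ℝ) (x : Fin (m'+1) → ℝ), x ≠ 0 →
        (ι B).mulVec x = 0 →
        y₁ ⬝ᵥ x = 0 ∧ proj j x ≠ 0 ∧ B.mulVec (proj j x) = 0 := by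
      intro B x hx0 hxk
      have h0 : t * (y₁ ⬝ᵥ x) = 0 := by
        rw [← mulVec_iotaM_zero t y₁ j B x]; exact congrFun hxk 0
      have hdot : y₁ ⬝ᵥ x = 0 := by
        rcases mul_eq_zero.mp h0 with h | h
        · exact absurd h (ne_of_gt ht0)
        · exact h
      have hBk : B.mulVec (proj j x) = 0 := by
        funext r
        rw [← mulVec_iotaM_succ t y₁ j B x r]
        exact congrFun hxk r.succ
      refine ⟨hdot, ?_, hBk⟩
      intro hp0
      apply hx0
      have hxj : x j = 0 := by
        have hs : y₁ ⬝ᵥ x = y₁ j * x j + ∑ kk : Fin m', y₁ (j.succAbove kk) * x (j.succAbove kk) :=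
          Fin.sum_univ_succAbove (fun c => y₁ c * x c) j
        have hz : ∀ kk : Fin m', x (j.succAbove kk) = 0 := fun kk => congrFun hp0 kk
        rw [hdot] at hs
        simp only [hz, mul_zero, Finset.sum_const_zero, add_zero] at hs
        have := mul_eq_zero.mp hs.symm
        tauto
      funext c
      rcases eq_or_ne c j with rfl | hcj
      · exact hxj
      · obtain ⟨kk, rfl⟩ := Fin.exists_succAbove_eq hcj
        exact congrFun hp0 kk
    set W' : Set (Matrix (Fin n') (Fin m') ℝ) := ι ⁻¹' (W ∩ U₁) with hW'
    set D' : Fin k → Set (Matrix (Fin n') (Fin m') ℝ) :=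
      fun j' => ι ⁻¹' (D (i₁.succAbove j')) with hD'
    have hcov' : {B : Matrix (Fin n') (Fin m') ℝ | B.rank ≤ k} ∩ W' ⊆ ⋃ i, D' i := by
      rintro B ⟨hBr, hBW⟩
      simp only [Set.mem_setOf_eq] at hBr
      have hιBS : ι B ∈ {A : Matrix (Fin (n'+1)) (Fin (m'+1)) ℝ | A.rank ≤ k + 1} ∩ W := by
        refine ⟨?_, hBW.1⟩
        have h := rank_iotaM_le t y₁ j B
        simp only [Set.mem_setOf_eq, hι]
        omega
      obtain ⟨i, hi⟩ := Set.mem_iUnion.mp (hcov hιBS)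
      have hne : i ≠ i₁ := by
        rintro rfl
        obtain ⟨x, ⟨hx0, hxk⟩, hxV⟩ := hU₁ (ι B) ⟨hBW.2, hi⟩
        have := (hker B x hx0 hxk).1
        rw [hV₁def] at hxV
        simp only [Set.mem_setOf_eq] at hxV
        linarith
      obtain ⟨j', rfl⟩ := Fin.exists_succAbove_eq hne
      exact Set.mem_iUnion.mpr ⟨j', hi⟩
    obtain ⟨j', B, hBD', hBnc⟩ := IH n' m' (by omega) (by omega) W'
      (hWU.preimage hιcont) (by show ι 0 ∈ W ∩ U₁; exact htWU) D' hcov'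
    apply hBnc
    -- transfer continuity
    obtain ⟨y, ⟨hy0, hyk⟩, hy⟩ := hc (i₁.succAbove j') (ι B) hBD'
    obtain ⟨-, hw0, hwk⟩ := hker B y hy0 hyk
    refine ⟨proj j y, ⟨hw0, hwk⟩, ?_⟩
    intro V' hV'open hwV'
    obtain ⟨U, hUopen, hUx, hU⟩ := hy ((proj j) ⁻¹' V') (hV'open.preimage (continuous_proj j)) hwV'
    refine ⟨ι ⁻¹' U, hUopen.preimage hιcont, hUx, ?_⟩
    rintro z' ⟨hz'U, hz'D⟩
    obtain ⟨x, ⟨hx0, hxk⟩, hxV⟩ := hU (ι z') ⟨hz'U, hz'D⟩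
    exact ⟨proj j x, ⟨(hker z' x hx0 hxk).2.1, (hker z' x hx0 hxk).2.2⟩, hxV⟩

/-- The multivalued map `LinEq : A ↦ {x ≠ 0 : A·x = 0}`, defined on the singular
matrices `{A ∈ ℝ^{n×m} : rank A ≤ min(n, m-1)}`, is not `min(n, m-1)`-continuous. -/
theorem linEq_not_d_continuous (n m : ℕ) (hm : 1 ≤ m) :
    ∀ D : Fin (min n (m - 1)) → Set (Matrix (Fin n) (Fin m) ℝ),
      (⋃ i, D i) = {A : Matrix (Fin n) (Fin m) ℝ | A.rank ≤ min n (m - 1)} →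
      ∃ i, ∃ A ∈ D i,
        ¬ MVContinuousAt
            (fun A : Matrix (Fin n) (Fin m) ℝ =>
              {x : Fin m → ℝ | x ≠ 0 ∧ A.mulVec x = 0})
            (D i) A := by
  intro D hD
  refine linEq_key (min n (m - 1)) n m (min_le_left _ _) (by omega) Set.univ isOpen_univ
    (Set.mem_univ _) D ?_
  rw [hD]
  exact fun A hA => hA.1
end

section
/- Fix d ∈ ℕ, d ≥ 2, and let S be the set of real symmetric d×d matrices (a topological subspace of ℝ^{d×d} with the Euclidean topology). Consider the multivalued map Diag with domain S defined by Diag(A) = the set of d-tuples (w_1,…,w_d) ∈ (ℝ^d)^d that form a basis of ℝ^d and such that each w_j is an eigenvector of A (i.e. w_j ≠ 0 and A·w_j = λ_j w_j for some λ_j ∈ ℝ); by the spectral theorem Diag(A) ≠ ∅ for every A ∈ S. Then Diag is not (d−1)-continuous as a multivalued map: for every family of sets D_1, …, D_{d−1} with S = D_1 ∪ … ∪ D_{d−1}, there exist an index i and a matrix A ∈ D_i such that Diag is not continuous at A relative to D_i. -/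
/-!
Suppose the pieces `D i` cover the symmetric matrices and `Diag` is continuous on each. We use
up pieces one at a time, attaching to each used piece `i` a vector `v i` (orthonormal family)
and a value `τ i` (distinct, nonzero). Since the `τ i` are simple eigenvalues of
`A = ∑ τ i • v i v iᵀ`, every eigenbasis of `A` contains a multiple of each `v i`. The
construction also ensures that near `A`, on each used piece `D i`, some eigenbasis avoids the
line `ℝ v i`. Hence `A` lies in an unused piece `D k`, and continuity there gives an eigenbasis
`y` of `A` that can be followed nearby. Choose a unit vector `u` orthogonal to every `v i` and
off every line `ℝ y j`; this is possible while at most `d - 2` pieces are used. Passing to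
`A + t • u uᵀ` for small `t`, with `v k = u`, uses up `D k`. With only `d - 1` pieces, all of
them are eventually used, and then `A` lies in none of them.
-/

open Matrix Submodule Function Module Topology

theorem LinearIndependent.exists_apply_eq_smul_of_span_eq_top {ι K V : Type*} [Fintype ι]
    [Field K] [AddCommGroup V] [Module K V] {w : ι → V} (hli : LinearIndependent K w)
    (hspan : span K (Set.range w) = ⊤) (f : V →ₗ[K] V) (hw : ∀ j, ∃ a : K, f (w j) = a • w j)
    {μ : K} {x : V} (hx : f x = μ • x) (hx0 : x ≠ 0) :
    ∃ j, f (w j) = μ • w j := by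
  choose a ha using hw
  obtain ⟨c, rfl⟩ :=
    (mem_span_range_iff_exists_fun K).mp (hspan ▸ mem_top : x ∈ span K (Set.range w))
  have hcoef : ∀ j, c j * (a j - μ) = 0 := by
    refine Fintype.linearIndependent_iff.mp hli _ ?_
    simp only [map_sum, map_smul, ha, Finset.smul_sum, smul_smul] at hx
    simp only [mul_sub, sub_smul, Finset.sum_sub_distrib, hx, mul_comm μ, sub_self]
  obtain ⟨j, hj⟩ : ∃ j, c j ≠ 0 := by
    by_contra! h
    simp [h] at hx0
  exact ⟨j, by rw [ha j, sub_eq_zero.mp ((mul_eq_zero.mp (hcoef j)).resolve_left hj)]⟩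

theorem Submodule.exists_ne_zero_forall_notMem_span_singleton {J K V : Type*} [Finite J]
    [Field K] [Infinite K] [AddCommGroup V] [Module K V] {W : Submodule K V}
    (hW : 1 < finrank K W) {y : J → V} (hy : ∀ j, y j ≠ 0) :
    ∃ u ∈ W, u ≠ 0 ∧ ∀ j, y j ∉ K ∙ u := by
  have : Nontrivial W := Module.nontrivial_of_finrank_pos (R := K) (by omega)
  let p : Option J → Submodule K W := fun o => o.elim ⊥ fun j => (K ∙ y j).comap W.subtype
  have hp : ∀ o, p o ≠ ⊤ := by
    rintro (_ | j) h
    · exact bot_ne_top h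
    · have := Submodule.finrank_mono (comap_subtype_eq_top.mp h)
      rw [finrank_span_singleton (hy j)] at this
      omega
  obtain ⟨u, hu⟩ := exists_forall_notMem_of_forall_ne_top p hp
  refine ⟨u, u.2, fun h0 => hu none ?_, fun j hj => hu (some j) ?_⟩
  · simpa [p] using h0
  obtain ⟨a, ha⟩ := mem_span_singleton.mp hj
  have ha0 : a ≠ 0 := by rintro rfl; exact hy j (by rw [← ha, zero_smul])
  exact mem_span_singleton.mpr ⟨a⁻¹, by rw [← ha, smul_smul, inv_mul_cancel₀ ha0, one_smul]; rfl⟩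

theorem Matrix.card_sub_card_le_finrank_ker_mulVecLin {m n K : Type*} [Fintype m] [Fintype n]
    [Field K] (B : Matrix m n K) :
    Fintype.card n - Fintype.card m ≤ finrank K (LinearMap.ker B.mulVecLin) := by
  have := LinearMap.finrank_range_add_finrank_ker B.mulVecLin
  have := B.rank_le_card_height
  rw [Matrix.rank] at this
  simp only [finrank_fintype_fun_eq_card] at *
  omega

theorem exists_smul_dotProduct_self_eq_one {n : Type*} [Fintype n] {u : n → ℝ} (hu : u ≠ 0) :
    ∃ c : ℝ, c ≠ 0 ∧ (c • u) ⬝ᵥ (c • u) = 1 := by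
  have hpos : 0 < u ⬝ᵥ u := by simpa using dotProduct_self_star_pos_iff.mpr hu
  refine ⟨(√(u ⬝ᵥ u))⁻¹, by positivity, ?_⟩
  rw [smul_dotProduct, dotProduct_smul, smul_smul, smul_eq_mul, ← mul_inv,
    Real.mul_self_sqrt hpos.le, inv_mul_cancel₀ hpos.ne']

theorem exists_unit_orthogonal_forall_notMem_span {ι J n : Type*} [Finite J] [Fintype n]
    (T : Finset ι) (v : ι → n → ℝ) (hT : T.card + 2 ≤ Fintype.card n)
    {y : J → n → ℝ} (hy : ∀ j, y j ≠ 0) :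
    ∃ u : n → ℝ, u ⬝ᵥ u = 1 ∧ (∀ l ∈ T, v l ⬝ᵥ u = 0) ∧ ∀ j, y j ∉ ℝ ∙ u := by
  let B : Matrix T n ℝ := of fun l => v l
  have hW : 1 < finrank ℝ (LinearMap.ker B.mulVecLin) := by
    have := B.card_sub_card_le_finrank_ker_mulVecLin
    rw [Fintype.card_coe] at this
    omega
  obtain ⟨u, huW, hu0, huy⟩ := exists_ne_zero_forall_notMem_span_singleton hW hy
  obtain ⟨c, hc, hcu⟩ := exists_smul_dotProduct_self_eq_one hu0
  refine ⟨c • u, hcu, fun l hl => ?_, fun j => ?_⟩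
  · rw [dotProduct_smul, show v l ⬝ᵥ u = 0 from congrFun (LinearMap.mem_ker.mp huW) ⟨l, hl⟩,
      smul_zero]
  · rw [span_singleton_smul_eq (IsUnit.mk0 _ hc)]
    exact huy j

theorem exists_notMem_add_smul_mem_of_mem_nhds {E : Type*} [TopologicalSpace E] [AddCommGroup E]
    [Module ℝ E] [ContinuousAdd E] [ContinuousSMul ℝ E] {x : E} {N : Set E} (hN : N ∈ 𝓝 x)
    (y : E) (s : Finset ℝ) : ∃ t ∉ s, x + t • y ∈ N := by
  have hcont : Continuous fun t : ℝ => x + t • y := by fun_prop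
  have : (fun t : ℝ => x + t • y) ⁻¹' N ∈ 𝓝 0 :=
    hcont.continuousAt.preimage_mem_nhds (by simpa using hN)
  obtain ⟨t, ht, hts⟩ := (infinite_of_mem_nhds 0 this).exists_notMem_finset s
  exact ⟨t, hts, ht⟩

/-- The map `Diag` of the statement. -/
def Matrix.eigenbases {n K : Type*} [Fintype n] [Field K] (A : Matrix n n K) : Set (n → n → K) :=
  {w | LinearIndependent K w ∧ span K (Set.range w) = ⊤ ∧
    ∀ j, w j ≠ 0 ∧ ∃ l : K, A *ᵥ w j = l • w j}

section SpectralSum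

variable {ι n K : Type*} [Field K]

def spectralSum (T : Finset ι) (v : ι → n → K) (τ : ι → K) : Matrix n n K :=
  ∑ l ∈ T, τ l • vecMulVec (v l) (v l)

theorem spectralSum_isSymm (T : Finset ι) (v : ι → n → K) (τ : ι → K) :
    (spectralSum T v τ).IsSymm := by
  simp [spectralSum, IsSymm, transpose_sum]

theorem spectralSum_insert [DecidableEq ι] {T : Finset ι} {i : ι} (hi : i ∉ T)
    (v : ι → n → K) (τ : ι → K) (u : n → K) (t : K) :
    spectralSum (insert i T) (update v i u) (update τ i t) =
      spectralSum T v τ + t • vecMulVec u u := by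
  rw [spectralSum, Finset.sum_insert hi, update_self, update_self, add_comm]
  congr 1
  refine Finset.sum_congr rfl fun l hl => ?_
  have hli : l ≠ i := ne_of_mem_of_not_mem hl hi
  rw [update_of_ne hli, update_of_ne hli]

variable [Fintype n] {T : Finset ι} {v : ι → n → K}

theorem spectralSum_mulVec (τ : ι → K) (x : n → K) :
    spectralSum T v τ *ᵥ x = ∑ l ∈ T, (τ l * (v l ⬝ᵥ x)) • v l := by
  simp [spectralSum, sum_mulVec, smul_mulVec, vecMulVec_mulVec, smul_smul]

theorem spectralSum_mulVec_self (hv₁ : ∀ l ∈ T, v l ⬝ᵥ v l = 1)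
    (hv₀ : (T : Set ι).Pairwise fun l l' => v l ⬝ᵥ v l' = 0) (τ : ι → K) {k : ι} (hk : k ∈ T) :
    spectralSum T v τ *ᵥ v k = τ k • v k := by
  rw [spectralSum_mulVec, Finset.sum_eq_single_of_mem k hk]
  · rw [hv₁ k hk, mul_one]
  · intro l hl hlk
    rw [hv₀ hl hk hlk, mul_zero, zero_smul]

theorem dotProduct_spectralSum_mulVec (hv₁ : ∀ l ∈ T, v l ⬝ᵥ v l = 1)
    (hv₀ : (T : Set ι).Pairwise fun l l' => v l ⬝ᵥ v l' = 0) (τ : ι → K) {k : ι} (hk : k ∈ T)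
    (x : n → K) : v k ⬝ᵥ (spectralSum T v τ *ᵥ x) = τ k * (v k ⬝ᵥ x) := by
  rw [spectralSum_mulVec, dotProduct_sum, Finset.sum_eq_single_of_mem k hk]
  · rw [dotProduct_smul, hv₁ k hk, smul_eq_mul, mul_one]
  · intro l hl hlk
    rw [dotProduct_smul, hv₀ hk hl (Ne.symm hlk), smul_zero]

theorem mem_span_of_spectralSum_mulVec_eq (hv₁ : ∀ l ∈ T, v l ⬝ᵥ v l = 1)
    (hv₀ : (T : Set ι).Pairwise fun l l' => v l ⬝ᵥ v l' = 0)
    {τ : ι → K} (hτ : Set.InjOn τ T) {k : ι} (hk : k ∈ T) (hτk : τ k ≠ 0) {x : n → K}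
    (hx : spectralSum T v τ *ᵥ x = τ k • x) : x ∈ K ∙ v k := by
  have horth : ∀ l ∈ T, l ≠ k → v l ⬝ᵥ x = 0 := by
    intro l hl hlk
    have h := dotProduct_spectralSum_mulVec hv₁ hv₀ τ hl x
    rw [hx, dotProduct_smul, smul_eq_mul] at h
    by_contra h0
    exact hlk (hτ hl hk (mul_right_cancel₀ h0 h).symm)
  have hτx : τ k • x = τ k • ((v k ⬝ᵥ x) • v k) := by
    rw [← hx, spectralSum_mulVec, Finset.sum_eq_single_of_mem k hk, mul_smul]
    intro l hl hlk
    rw [horth l hl hlk, mul_zero, zero_smul]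
  exact mem_span_singleton.mpr ⟨_, (smul_right_injective _ hτk hτx).symm⟩

theorem exists_mem_span_of_mem_eigenbases_spectralSum (hv₁ : ∀ l ∈ T, v l ⬝ᵥ v l = 1)
    (hv₀ : (T : Set ι).Pairwise fun l l' => v l ⬝ᵥ v l' = 0)
    {τ : ι → K} (hτ : Set.InjOn τ T) {k : ι} (hk : k ∈ T) (hτk : τ k ≠ 0)
    {w : n → n → K} (hw : w ∈ (spectralSum T v τ).eigenbases) : ∃ j, w j ∈ K ∙ v k := by
  have hvk : v k ≠ 0 := fun h => by simpa [h] using hv₁ k hk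
  obtain ⟨j, hj⟩ := hw.1.exists_apply_eq_smul_of_span_eq_top hw.2.1 (spectralSum T v τ).mulVecLin
    (fun j => (hw.2.2 j).2) (spectralSum_mulVec_self hv₁ hv₀ τ hk) hvk
  exact ⟨j, mem_span_of_spectralSum_mulVec_eq hv₁ hv₀ hτ hk hτk hj⟩

end SpectralSum

section Obstruction

variable {ι n : Type*} [Fintype n]

/-- The state after the pieces `T` are used up. Every eigenbasis of `spectralSum T v τ` contains
a multiple of each `v i`, but on `O ∩ D i` some eigenbasis avoids `ℝ ∙ v i`; so
`spectralSum T v τ ∉ D i` for `i ∈ T`. -/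
structure EigenbasisObstruction (D : ι → Set (Matrix n n ℝ)) (T : Finset ι) where
  v : ι → n → ℝ
  τ : ι → ℝ
  O : Set (Matrix n n ℝ)
  dotProduct_self : ∀ l ∈ T, v l ⬝ᵥ v l = 1
  pairwise_dotProduct : (T : Set ι).Pairwise fun l l' => v l ⬝ᵥ v l' = 0
  injOn : Set.InjOn τ T
  ne_zero : ∀ l ∈ T, τ l ≠ 0
  isOpen : IsOpen O
  spectralSum_mem : spectralSum T v τ ∈ O
  exists_mem_eigenbases_notMem_span : ∀ i ∈ T, ∀ z ∈ O ∩ D i, ∃ w ∈ z.eigenbases, ∀ j, w j ∉ ℝ ∙ v i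

namespace EigenbasisObstruction

variable {D : ι → Set (Matrix n n ℝ)} {T : Finset ι}

def empty : EigenbasisObstruction D ∅ where
  v := 0
  τ := 0
  O := Set.univ
  dotProduct_self := by simp
  pairwise_dotProduct := by simp
  injOn := by simp
  ne_zero := by simp
  isOpen := isOpen_univ
  spectralSum_mem := Set.mem_univ _
  exists_mem_eigenbases_notMem_span := by simp

theorem notMem (B : EigenbasisObstruction D T) {i : ι} (hi : spectralSum T B.v B.τ ∈ D i) :
    i ∉ T := fun hiT => by
  obtain ⟨w, hw, hnot⟩ := B.exists_mem_eigenbases_notMem_span i hiT _ ⟨B.spectralSum_mem, hi⟩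
  obtain ⟨j, hj⟩ := exists_mem_span_of_mem_eigenbases_spectralSum B.dotProduct_self
    B.pairwise_dotProduct B.injOn hiT (B.ne_zero i hiT) hw
  exact hnot j hj

def extend [DecidableEq ι] (B : EigenbasisObstruction D T) {i : ι} (hiT : i ∉ T)
    {u : n → ℝ} (hu₁ : u ⬝ᵥ u = 1) (hu₀ : ∀ l ∈ T, B.v l ⬝ᵥ u = 0)
    {t : ℝ} (ht : t ∉ Finset.image B.τ T) (ht₀ : t ≠ 0) {U : Set (Matrix n n ℝ)} (hU : IsOpen U)
    (htU : spectralSum T B.v B.τ + t • vecMulVec u u ∈ B.O ∩ U)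
    (hUu : ∀ z ∈ U ∩ D i, ∃ w ∈ z.eigenbases, ∀ j, w j ∉ ℝ ∙ u) :
    EigenbasisObstruction D (insert i T) :=
  have hv : ∀ l ∈ T, update B.v i u l = B.v l := fun l hl =>
    update_of_ne (ne_of_mem_of_not_mem hl hiT) _ _
  have hτ : ∀ l ∈ T, update B.τ i t l = B.τ l := fun l hl =>
    update_of_ne (ne_of_mem_of_not_mem hl hiT) _ _
  { v := update B.v i u
    τ := update B.τ i t
    O := B.O ∩ U
    dotProduct_self := by
      simp only [Finset.forall_mem_insert, update_self, hu₁, true_and]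
      exact fun l hl => (hv l hl).symm ▸ B.dotProduct_self l hl
    pairwise_dotProduct := by
      rw [Finset.coe_insert, Set.pairwise_insert_of_notMem (by exact_mod_cast hiT)]
      refine ⟨fun l hl l' hl' hll' => ?_, fun l hl => ?_⟩
      · simpa only [hv l hl, hv l' hl'] using B.pairwise_dotProduct hl hl' hll'
      · simp only [hv l hl, update_self, dotProduct_comm u, hu₀ l hl, and_self]
    injOn := by
      rw [Finset.coe_insert, Set.injOn_insert (by exact_mod_cast hiT), update_self]
      refine ⟨B.injOn.congr fun l hl => (hτ l hl).symm, ?_⟩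
      rintro ⟨l, hl, hlt⟩
      rw [hτ l hl] at hlt
      exact ht (Finset.mem_image.mpr ⟨l, hl, hlt⟩)
    ne_zero := by
      simp only [Finset.forall_mem_insert, update_self]
      exact ⟨ht₀, fun l hl => (hτ l hl).symm ▸ B.ne_zero l hl⟩
    isOpen := B.isOpen.inter hU
    spectralSum_mem := by rwa [spectralSum_insert hiT]
    exists_mem_eigenbases_notMem_span := by
      simp only [Finset.forall_mem_insert, update_self]
      refine ⟨fun z hz => hUu z ⟨hz.1.2, hz.2⟩, fun l hl z hz => ?_⟩
      rw [hv l hl]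
      exact B.exists_mem_eigenbases_notMem_span l hl z ⟨hz.1.1, hz.2⟩ }

theorem exists_insert [DecidableEq ι]
    (hcover : ∀ A : Matrix n n ℝ, A.IsSymm → ∃ i, A ∈ D i)
    (hcont : ∀ i, ∀ A ∈ D i, MVContinuousAt Matrix.eigenbases (D i) A)
    (B : EigenbasisObstruction D T) (hT : T.card + 2 ≤ Fintype.card n) :
    ∃ i ∉ T, Nonempty (EigenbasisObstruction D (insert i T)) := by
  obtain ⟨i, hi⟩ := hcover _ (spectralSum_isSymm T B.v B.τ)
  have hiT := B.notMem hi
  obtain ⟨y, hy, hyV⟩ := hcont i _ hi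
  obtain ⟨u, hu₁, hu₀, huy⟩ :=
    exists_unit_orthogonal_forall_notMem_span T B.v hT fun j => (hy.2.2 j).1
  have hV : IsOpen {w : n → n → ℝ | ∀ j, w j ∉ ℝ ∙ u} := by
    simp only [Set.ofPred_forall]
    exact isOpen_iInter_of_finite fun j =>
      (closed_of_finiteDimensional _).isOpen_compl.preimage (continuous_apply j)
  obtain ⟨U, hU, hAU, hUu⟩ := hyV _ hV huy
  -- `t ∉ {0} ∪ τ '' T` keeps every `τ l` and `t` a simple eigenvalue of the new matrix.
  obtain ⟨t, ht, htU⟩ := exists_notMem_add_smul_mem_of_mem_nhds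
    ((B.isOpen.inter hU).mem_nhds ⟨B.spectralSum_mem, hAU⟩) (vecMulVec u u)
    (insert 0 (T.image B.τ))
  rw [Finset.mem_insert, not_or] at ht
  exact ⟨i, hiT, ⟨B.extend hiT hu₁ hu₀ ht.2 ht.1 hU htU hUu⟩⟩

end EigenbasisObstruction

end Obstruction

theorem Matrix.card_le_of_forall_mvContinuousAt_eigenbases {ι n : Type*} [Fintype ι] [Fintype n]
    {D : ι → Set (Matrix n n ℝ)} (hcover : ∀ A : Matrix n n ℝ, A.IsSymm → ∃ i, A ∈ D i)
    (hcont : ∀ i, ∀ A ∈ D i, MVContinuousAt Matrix.eigenbases (D i) A) :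
    Fintype.card n ≤ Fintype.card ι := by
  classical
  by_contra! hcard
  have hgrow : ∀ k ≤ Fintype.card ι,
      ∃ T : Finset ι, T.card = k ∧ Nonempty (EigenbasisObstruction D T) := by
    intro k
    induction k with
    | zero => exact fun _ => ⟨∅, rfl, ⟨.empty⟩⟩
    | succ k ih =>
      intro hk
      obtain ⟨T, rfl, ⟨B⟩⟩ := ih (by omega)
      obtain ⟨i, hiT, hB⟩ := B.exists_insert hcover hcont (by omega)
      exact ⟨insert i T, Finset.card_insert_of_notMem hiT, hB⟩
  obtain ⟨T, hT, ⟨B⟩⟩ := hgrow _ le_rfl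
  obtain ⟨i, hi⟩ := hcover _ (spectralSum_isSymm T B.v B.τ)
  exact B.notMem hi (Finset.eq_univ_of_card T hT ▸ Finset.mem_univ i)

/-- The multivalued diagonalization map `Diag`, assigning to a real symmetric `d × d`
matrix the set of bases of `ℝ^d` consisting of eigenvectors, is not `(d-1)`-continuous. -/
theorem diag_not_d_minus_one_continuous (d : ℕ) (hd : 2 ≤ d) :
    ∀ D : Fin (d - 1) → Set (Matrix (Fin d) (Fin d) ℝ),
      (⋃ i, D i) = {A : Matrix (Fin d) (Fin d) ℝ | A.IsSymm} →
      ∃ i, ∃ A ∈ D i,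
        ¬ MVContinuousAt
            (fun A : Matrix (Fin d) (Fin d) ℝ =>
              {w : Fin d → (Fin d → ℝ) |
                LinearIndependent ℝ w ∧ Submodule.span ℝ (Set.range w) = ⊤ ∧
                ∀ j, w j ≠ 0 ∧ ∃ l : ℝ, A.mulVec (w j) = l • w j})
            (D i) A := by
  intro D hD
  by_contra! hcont
  have hcover : ∀ A : Matrix (Fin d) (Fin d) ℝ, A.IsSymm → ∃ i, A ∈ D i := fun A hA =>
    Set.mem_iUnion.mp (hD ▸ hA)
  have := Matrix.card_le_of_forall_mvContinuousAt_eigenbases hcover hcont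
  simp only [Fintype.card_fin] at this
  omega
end

section
/- Let S = {f ∈ C([0,1], ℝ) : f(0) = −1, f(1) = 1, and |f(x)| ≤ 1 for all x ∈ [0,1]}, a subspace of the space of continuous real-valued functions on [0,1] with the supremum metric. Consider the multivalued map Intermed with domain S defined by Intermed(f) = {x ∈ [0,1] : f(x) = 0}, which is nonempty for every f ∈ S by the intermediate value theorem. Then for every natural number d, Intermed is not d-continuous as a multivalued map: for every family of sets D_1, …, D_d with S = D_1 ∪ … ∪ D_d, there exist an index i and a function f ∈ D_i such that Intermed is not continuous at f relative to D_i. -/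
namespace IVT

abbrev CI := C(Set.Icc (0:ℝ) 1, ℝ)
abbrev I01 : Type := Set.Icc (0:ℝ) 1

/-- A "plateau system": `f` is negative before `a`, zero on `[a,b]`, positive after `b`. -/
structure Sys (f : CI) (a b : ℝ) : Prop where
  ha : 0 < a
  hab : a < b
  hb : b < 1
  hneg : ∀ x : I01, (x:ℝ) < a → f x < 0
  hzero : ∀ x : I01, a ≤ (x:ℝ) → (x:ℝ) ≤ b → f x = 0
  hpos : ∀ x : I01, b < (x:ℝ) → 0 < f x
  hbound : ∀ x, |f x| ≤ 1
  hf0 : f ⟨0, by norm_num⟩ = -1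
  hf1 : f ⟨1, by norm_num⟩ = 1

lemma Sys.zero_loc {f : CI} {a b : ℝ} (hS : Sys f a b) {x : I01} (hx : f x = 0) :
    a ≤ (x:ℝ) ∧ (x:ℝ) ≤ b := by
  constructor
  · by_contra h
    exact absurd hx (ne_of_lt (hS.hneg x (lt_of_not_ge h)))
  · by_contra h
    exact absurd hx (ne_of_gt (hS.hpos x (lt_of_not_ge h)))

/-- The fan of admissible perturbations of `f` of size `ε`. -/
def Fan (f : CI) (ε : ℝ) : Set CI :=
  {g | (∀ x, ε ≤ |f x| → g x = f x) ∧ ∀ x, |g x - f x| ≤ ε}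

lemma self_mem_Fan {f : CI} {ε : ℝ} (hε : 0 ≤ ε) : f ∈ Fan f ε :=
  ⟨fun _ _ => rfl, fun x => by simp [hε]⟩

/-- `D` traps zeros near `c` at `f`: arbitrarily close to `f` there are members of `D`
all of whose zeros are within `δ` of `c`. -/
def TrapAt (D : Set CI) (f : CI) (c : ℝ) : Prop :=
  ∀ δ > 0, ∃ g ∈ D, dist g f ≤ δ ∧ ∀ x : I01, g x = 0 → |(x:ℝ) - c| ≤ δ

/-- Discontinuity criterion: if `f ∈ D` and `D` traps zeros at two distinct points,
then the zero-set map is not continuous at `f` relative to `D`. -/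
lemma lemA {D : Set CI} {f : CI} {a b : ℝ} (hab : a < b) (hf : f ∈ D)
    (hL : TrapAt D f a) (hR : TrapAt D f b) :
    ¬ MVContinuousAt (fun f : CI => {x : I01 | f x = 0}) D f := by
  rintro ⟨y, hy, hcont⟩
  have key : ∀ c r : ℝ, 0 < r → r < |(y:ℝ) - c| → TrapAt D f c → False := by
    intro c r hr hyc htrap
    obtain ⟨U, hUo, hfU, hU⟩ := hcont {x : I01 | r < |(x:ℝ) - c|}
      (isOpen_lt continuous_const ((continuous_subtype_val.sub continuous_const).abs)) hyc
    obtain ⟨ρ, hρ, hball⟩ := Metric.isOpen_iff.mp hUo f hfU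
    obtain ⟨g, hgD, hgd, hgz⟩ := htrap (min r (ρ/2)) (by positivity)
    have hgU : g ∈ U := hball (by
      rw [Metric.mem_ball]
      calc dist g f ≤ min r (ρ/2) := hgd
        _ ≤ ρ/2 := min_le_right _ _
        _ < ρ := by linarith)
    obtain ⟨x, hx0, hxV⟩ := hU g ⟨hgU, hgD⟩
    have h1 : |(x:ℝ) - c| ≤ r := le_trans (hgz x hx0) (min_le_left _ _)
    exact absurd hxV (not_lt.mpr h1)
  by_cases h : (y:ℝ) = a
  · refine key b ((b-a)/2) (by linarith) ?_ hR
    rw [h, abs_sub_comm, abs_of_pos (by linarith)]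
    linarith
  · have h0 : 0 < |(y:ℝ) - a| := abs_pos.mpr (sub_ne_zero.mpr h)
    exact key a (|(y:ℝ) - a|/2) (by linarith) (by linarith) hL

noncomputable def lchild (f : CI) (a' η ν : ℝ) : CI :=
  ⟨fun x => max (f x) (min (((x:ℝ) - a') / η) ν),
    f.continuous.max
      (((continuous_subtype_val.sub continuous_const).div_const η).min continuous_const)⟩

noncomputable def rchild (f : CI) (b' η ν : ℝ) : CI :=
  ⟨fun x => min (f x) (max (((x:ℝ) - b') / η) (-ν)),
    f.continuous.min
      (((continuous_subtype_val.sub continuous_const).div_const η).max continuous_const)⟩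

lemma lchild_spec {f : CI} {a b : ℝ} (hS : Sys f a b) (η ν : ℝ)
    (hη : 0 < η) (hab' : a + η < b) (hν : 0 < ν) (hν1 : ν ≤ 1) :
    Sys (lchild f (a+η) η ν) a (a+η)
    ∧ (∀ x, 0 ≤ lchild f (a+η) η ν x - f x ∧ lchild f (a+η) η ν x - f x ≤ ν)
    ∧ (∀ x, ν ≤ |f x| → lchild f (a+η) η ν x = f x) := by
  set g := lchild f (a+η) η ν with hg
  have happ : ∀ x : I01, g x = max (f x) (min (((x:ℝ) - (a+η)) / η) ν) := fun x => rfl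
  -- on t ≤ a the tilt is ≤ -1 ≤ f
  have hlow : ∀ x : I01, (x:ℝ) ≤ a → g x = f x := by
    intro x hx
    rw [happ]
    apply max_eq_left
    apply le_trans (min_le_left _ _)
    have : ((x:ℝ) - (a+η)) / η ≤ -1 := by
      rw [div_le_iff₀ hη]; linarith
    linarith [abs_le.mp (hS.hbound x) |>.1]
  have hmid : ∀ x : I01, a ≤ (x:ℝ) → (x:ℝ) ≤ a + η → g x = 0 := by
    intro x hx1 hx2
    rw [happ, hS.hzero x hx1 (by linarith)]
    apply max_eq_left
    apply le_trans (min_le_left _ _)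
    rw [div_nonpos_iff]
    right; constructor <;> linarith
  have hhigh : ∀ x : I01, a + η < (x:ℝ) → 0 < g x := by
    intro x hx
    rw [happ]
    apply lt_max_of_lt_right
    apply lt_min
    · rw [lt_div_iff₀ hη]; linarith
    · exact hν
  refine ⟨⟨hS.ha, by linarith, by linarith [hS.hb], ?_, ?_, ?_, ?_, ?_, ?_⟩, ?_, ?_⟩
  · intro x hx
    rw [hlow x (le_of_lt hx)]
    exact hS.hneg x hx
  · exact hmid
  · exact hhigh
  · -- bound
    intro x
    rw [abs_le]
    constructor
    · rw [happ]
      exact le_trans (abs_le.mp (hS.hbound x) |>.1) (le_max_left _ _)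
    · rw [happ]
      apply max_le (abs_le.mp (hS.hbound x) |>.2)
      exact le_trans (min_le_right _ _) hν1
  · rw [hlow ⟨0, by norm_num⟩ (by simpa using le_of_lt hS.ha)]
    exact hS.hf0
  · rw [happ, hS.hf1]
    exact max_eq_left (le_trans (min_le_right _ _) hν1)
  · -- 0 ≤ g - f ≤ ν
    intro x
    constructor
    · rw [happ]; simp [le_max_left]
    · rcases le_or_gt ((x:ℝ)) a with h | h
      · rw [hlow x h]; simp [le_of_lt hν]
      · rcases le_or_gt ((x:ℝ)) b with h2 | h2
        · rw [happ, hS.hzero x (le_of_lt h) h2]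
          simp only [sub_zero]
          exact max_le (le_of_lt hν) (min_le_right _ _)
        · have hfx : 0 < f x := hS.hpos x h2
          rw [happ, sub_le_iff_le_add]
          exact max_le (by linarith) (le_trans (min_le_right _ _) (by linarith))
  · -- equality where |f| ≥ ν
    intro x hx
    rcases le_or_gt ν (f x) with h | h
    · rw [happ]
      exact max_eq_left (le_trans (min_le_right _ _) h)
    · -- then f x ≤ -ν, so x < a
      have hfx : f x ≤ -ν := by
        rcases abs_cases (f x) with ⟨he, hsign⟩ | ⟨he, hsign⟩ <;> rw [he] at hx <;> linarith
      have hxa : (x:ℝ) < a := by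
        by_contra hc
        push_neg at hc
        rcases le_or_gt ((x:ℝ)) b with h2 | h2
        · have := hS.hzero x hc h2; linarith
        · have := hS.hpos x h2; linarith
      exact hlow x (le_of_lt hxa)

lemma rchild_spec {f : CI} {a b : ℝ} (hS : Sys f a b) (η ν : ℝ)
    (hη : 0 < η) (hab' : a < b - η) (hν : 0 < ν) (hν1 : ν ≤ 1) :
    Sys (rchild f (b-η) η ν) (b-η) b
    ∧ (∀ x, -ν ≤ rchild f (b-η) η ν x - f x ∧ rchild f (b-η) η ν x - f x ≤ 0)
    ∧ (∀ x, ν ≤ |f x| → rchild f (b-η) η ν x = f x) := by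
  set g := rchild f (b-η) η ν with hg
  have happ : ∀ x : I01, g x = min (f x) (max (((x:ℝ) - (b-η)) / η) (-ν)) := fun x => rfl
  have hhigh : ∀ x : I01, b ≤ (x:ℝ) → g x = f x := by
    intro x hx
    rw [happ]
    apply min_eq_left
    have h1 : (1:ℝ) ≤ ((x:ℝ) - (b-η)) / η := by
      rw [le_div_iff₀ hη]; linarith
    exact le_trans (by linarith [abs_le.mp (hS.hbound x) |>.2]) (le_max_left _ _)
  have hmid : ∀ x : I01, b - η ≤ (x:ℝ) → (x:ℝ) ≤ b → g x = 0 := by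
    intro x hx1 hx2
    rw [happ, hS.hzero x (by linarith) hx2]
    apply min_eq_left
    exact le_max_of_le_left (div_nonneg (by linarith) hη.le)
  have hlow : ∀ x : I01, (x:ℝ) < b - η → g x < 0 := by
    intro x hx
    rw [happ]
    apply lt_of_le_of_lt (min_le_right _ _)
    apply max_lt
    · rw [div_lt_iff₀ hη]; linarith
    · linarith
  have hfle : ∀ x : I01, (x:ℝ) ≤ b → f x ≤ 0 := by
    intro x hx
    rcases le_or_gt a ((x:ℝ)) with h2 | h2
    · exact le_of_eq (hS.hzero x h2 hx)
    · exact le_of_lt (hS.hneg x h2)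
  refine ⟨⟨by linarith [hS.ha, hS.hab], by linarith, hS.hb, hlow, hmid, ?_, ?_, ?_, ?_⟩, ?_, ?_⟩
  · intro x hx
    rw [hhigh x (le_of_lt hx)]
    exact hS.hpos x hx
  · intro x
    rw [abs_le]
    constructor
    · rw [happ]
      apply le_min (abs_le.mp (hS.hbound x) |>.1)
      exact le_trans (by linarith) (le_max_right _ _)
    · rw [happ]
      exact le_trans (min_le_left _ _) (abs_le.mp (hS.hbound x) |>.2)
  · rw [happ, hS.hf0]
    exact min_eq_left (le_trans (by linarith) (le_max_right _ _))
  · rw [hhigh ⟨1, by norm_num⟩ (by simpa using le_of_lt hS.hb)]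
    exact hS.hf1
  · -- -ν ≤ g - f ≤ 0
    intro x
    constructor
    · rcases le_or_gt b ((x:ℝ)) with h | h
      · rw [hhigh x h]; linarith
      · have hf0' : f x ≤ 0 := hfle x (le_of_lt h)
        rw [happ]
        have h1 : f x - ν ≤ max (((x:ℝ) - (b-η))/η) (-ν) :=
          le_trans (by linarith) (le_max_right _ _)
        have h2 := le_min (by linarith : f x - ν ≤ f x) h1
        linarith [h2]
    · rw [happ]; linarith [min_le_left (f x) (max (((x:ℝ) - (b-η))/η) (-ν))]
  · intro x hx
    rcases le_or_gt (f x) (-ν) with h | h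
    · rw [happ]
      exact min_eq_left (le_trans h (le_trans (by linarith) (le_max_right _ _)))
    · have hfx : ν ≤ f x := by
        rcases abs_cases (f x) with ⟨he, hsign⟩ | ⟨he, hsign⟩ <;> rw [he] at hx <;> linarith
      have hxb : b ≤ (x:ℝ) := by
        by_contra hc
        push_neg at hc
        linarith [hfle x (le_of_lt hc)]
      exact hhigh x hxb

lemma exists_eps {g : CI} {α β c δ : ℝ} (hS : Sys g α β) (w : I01) (hw : δ ≤ |(w:ℝ) - c|)
    (hin : ∀ t : ℝ, α ≤ t → t ≤ β → |t - c| < δ) :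
    ∃ ε' > 0, ∀ x : I01, δ ≤ |(x:ℝ) - c| → ε' ≤ |g x| := by
  haveI : CompactSpace I01 := isCompact_iff_compactSpace.mp isCompact_Icc
  have hKc : IsCompact {x : I01 | δ ≤ |(x:ℝ) - c|} := (isClosed_le continuous_const
    ((continuous_subtype_val.sub continuous_const).abs)).isCompact
  obtain ⟨x₀, hx₀, hmin⟩ := hKc.exists_isMinOn ⟨w, hw⟩ g.continuous.abs.continuousOn
  refine ⟨|g x₀|, ?_, fun x hx => hmin hx⟩
  rw [gt_iff_lt, abs_pos]
  intro h0
  obtain ⟨h1, h2⟩ := hS.zero_loc h0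
  exact absurd hx₀ (not_le.mpr (hin _ h1 h2))

theorem main : ∀ (n : ℕ) (E : Fin n → Set CI) (f : CI) (a b ε : ℝ),
    Sys f a b → 0 < ε → ε ≤ 1/2 → Fan f ε ⊆ ⋃ i, E i →
    ∃ i, ∃ g ∈ E i, ¬ MVContinuousAt (fun f : CI => {x : I01 | f x = 0}) (E i) g := by
  intro n
  induction n with
  | zero =>
    intro E f a b ε hS hε _ hcov
    obtain ⟨i, -⟩ := Set.mem_iUnion.mp (hcov (self_mem_Fan hε.le))
    exact i.elim0
  | succ n IH =>
    intro E f a b ε hS hε hε2 hcov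
    obtain ⟨j, hfj⟩ := Set.mem_iUnion.mp (hcov (self_mem_Fan hε.le))
    by_cases htrap : TrapAt (E j) f a ∧ TrapAt (E j) f b
    · exact ⟨j, f, hfj, lemA hS.hab hfj htrap.1 htrap.2⟩
    have hδ' : ∃ δ : ℝ, 0 < δ ∧ δ ≤ a ∧ δ ≤ 1 - b ∧ δ ≤ b - a ∧ δ ≤ ε ∧
        ((∀ g ∈ E j, dist g f ≤ δ → ∃ x : I01, g x = 0 ∧ δ < |(x:ℝ) - a|) ∨
         (∀ g ∈ E j, dist g f ≤ δ → ∃ x : I01, g x = 0 ∧ δ < |(x:ℝ) - b|)) := by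
      rcases not_and_or.mp htrap with hnt | hnt
      all_goals (
        unfold TrapAt at hnt
        push_neg at hnt
        obtain ⟨δ0, hδ0, hP⟩ := hnt
        refine ⟨min δ0 (min a (min (1-b) (min (b-a) ε))), ?_, ?_, ?_, ?_, ?_, ?_⟩)
      · exact lt_min hδ0 (lt_min hS.ha (lt_min (by linarith [hS.hb])
          (lt_min (by linarith [hS.hab]) hε)))
      · exact le_trans (min_le_right _ _) (min_le_left _ _)
      · exact le_trans (min_le_right _ _) (le_trans (min_le_right _ _) (min_le_left _ _))
      · exact le_trans (min_le_right _ _) (le_trans (min_le_right _ _)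
          (le_trans (min_le_right _ _) (min_le_left _ _)))
      · exact le_trans (min_le_right _ _) (le_trans (min_le_right _ _)
          (le_trans (min_le_right _ _) (min_le_right _ _)))
      · left
        intro g hg hd
        obtain ⟨x, hx0, hxf⟩ := hP g hg (le_trans hd (min_le_left _ _))
        exact ⟨x, hx0, lt_of_le_of_lt (min_le_left _ _) hxf⟩
      · exact lt_min hδ0 (lt_min hS.ha (lt_min (by linarith [hS.hb])
          (lt_min (by linarith [hS.hab]) hε)))
      · exact le_trans (min_le_right _ _) (min_le_left _ _)
      · exact le_trans (min_le_right _ _) (le_trans (min_le_right _ _) (min_le_left _ _))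
      · exact le_trans (min_le_right _ _) (le_trans (min_le_right _ _)
          (le_trans (min_le_right _ _) (min_le_left _ _)))
      · exact le_trans (min_le_right _ _) (le_trans (min_le_right _ _)
          (le_trans (min_le_right _ _) (min_le_right _ _)))
      · right
        intro g hg hd
        obtain ⟨x, hx0, hxf⟩ := hP g hg (le_trans hd (min_le_left _ _))
        exact ⟨x, hx0, lt_of_le_of_lt (min_le_left _ _) hxf⟩
    obtain ⟨δ, hδpos, hδa, hδ1b, hδba, hδε, hPP⟩ := hδ'
    rcases hPP with hP | hP
    · -- left branch
      set f' := lchild f (a+δ/2) (δ/2) (δ/2) with hf'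
      obtain ⟨hS', hdiff, heqv⟩ := lchild_spec hS (δ/2) (δ/2) (half_pos hδpos)
        (by linarith) (half_pos hδpos) (by linarith [hS.hb, hS.hab, hS.ha])
      obtain ⟨ε₀, hε₀, hKmin⟩ := exists_eps (c := a) (δ := δ) hS' ⟨0, by norm_num⟩
        (by rw [show ((⟨0, by norm_num⟩ : I01):ℝ) = 0 from rfl, zero_sub, abs_neg, abs_of_pos hS.ha]; exact hδa)
        (fun t ht1 ht2 => abs_lt.mpr ⟨by linarith, by linarith⟩)
      set ε' := min ε₀ (δ/2) with hε'def
      have hε'pos : 0 < ε' := lt_min hε₀ (half_pos hδpos)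
      have hε'δ : ε' ≤ δ/2 := min_le_right _ _
      have hdiffabs : ∀ x, |f' x - f x| ≤ δ/2 :=
        fun x => abs_le.mpr ⟨by linarith [(hdiff x).1], (hdiff x).2⟩
      have hsub : Fan f' ε' ⊆ Fan f ε := by
        rintro g ⟨hg1, hg2⟩
        constructor
        · intro x hx
          have he : f' x = f x := heqv x (le_trans (by linarith) hx)
          rw [← he]
          exact hg1 x (by rw [he]; exact le_trans (by linarith) hx)
        · intro x
          calc |g x - f x| ≤ |g x - f' x| + |f' x - f x| := abs_sub_le _ _ _
            _ ≤ ε' + δ/2 := add_le_add (hg2 x) (hdiffabs x)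
            _ ≤ ε := by linarith
      have hdisj : ∀ g ∈ Fan f' ε', g ∉ E j := by
        rintro g ⟨hg1, hg2⟩ hgE
        have hdist : dist g f ≤ δ := by
          rw [ContinuousMap.dist_le hδpos.le]
          intro x
          rw [Real.dist_eq]
          calc |g x - f x| ≤ |g x - f' x| + |f' x - f x| := abs_sub_le _ _ _
            _ ≤ ε' + δ/2 := add_le_add (hg2 x) (hdiffabs x)
            _ ≤ δ := by linarith
        obtain ⟨x, hx0, hxfar⟩ := hP g hgE hdist
        have h1 : |f' x| < ε' := by
          by_contra hc
          push_neg at hc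
          rw [hg1 x hc] at hx0
          rw [hx0] at hc
          simp at hc
          linarith
        have h2 : |(x:ℝ) - a| < δ := by
          by_contra hc
          push_neg at hc
          linarith [hKmin x hc, min_le_left ε₀ (δ/2)]
        linarith
      have hcov' : Fan f' ε' ⊆ ⋃ k : Fin n, E (j.succAbove k) := by
        intro g hgm
        obtain ⟨i, hi⟩ := Set.mem_iUnion.mp (hcov (hsub hgm))
        have hij : i ≠ j := fun h => hdisj g hgm (h ▸ hi)
        obtain ⟨k, hk⟩ := Fin.exists_succAbove_eq hij
        exact Set.mem_iUnion.mpr ⟨k, hk ▸ hi⟩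
      obtain ⟨k, g, hgk, hbad⟩ := IH (fun k => E (j.succAbove k)) f' a (a+δ/2) ε' hS'
        hε'pos (by linarith) hcov'
      exact ⟨j.succAbove k, g, hgk, hbad⟩
    · -- right branch
      set f' := rchild f (b-δ/2) (δ/2) (δ/2) with hf'
      obtain ⟨hS', hdiff, heqv⟩ := rchild_spec hS (δ/2) (δ/2) (half_pos hδpos)
        (by linarith) (half_pos hδpos) (by linarith [hS.hb, hS.hab, hS.ha])
      obtain ⟨ε₀, hε₀, hKmin⟩ := exists_eps (c := b) (δ := δ) hS' ⟨1, by norm_num⟩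
        (by rw [show ((⟨1, by norm_num⟩ : I01):ℝ) = 1 from rfl, abs_of_pos (by linarith [hS.hb])]; linarith)
        (fun t ht1 ht2 => abs_lt.mpr ⟨by linarith, by linarith⟩)
      set ε' := min ε₀ (δ/2) with hε'def
      have hε'pos : 0 < ε' := lt_min hε₀ (half_pos hδpos)
      have hε'δ : ε' ≤ δ/2 := min_le_right _ _
      have hdiffabs : ∀ x, |f' x - f x| ≤ δ/2 :=
        fun x => abs_le.mpr ⟨by linarith [(hdiff x).1], by linarith [(hdiff x).2]⟩
      have hsub : Fan f' ε' ⊆ Fan f ε := by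
        rintro g ⟨hg1, hg2⟩
        constructor
        · intro x hx
          have he : f' x = f x := heqv x (le_trans (by linarith) hx)
          rw [← he]
          exact hg1 x (by rw [he]; exact le_trans (by linarith) hx)
        · intro x
          calc |g x - f x| ≤ |g x - f' x| + |f' x - f x| := abs_sub_le _ _ _
            _ ≤ ε' + δ/2 := add_le_add (hg2 x) (hdiffabs x)
            _ ≤ ε := by linarith
      have hdisj : ∀ g ∈ Fan f' ε', g ∉ E j := by
        rintro g ⟨hg1, hg2⟩ hgE
        have hdist : dist g f ≤ δ := by
          rw [ContinuousMap.dist_le hδpos.le]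
          intro x
          rw [Real.dist_eq]
          calc |g x - f x| ≤ |g x - f' x| + |f' x - f x| := abs_sub_le _ _ _
            _ ≤ ε' + δ/2 := add_le_add (hg2 x) (hdiffabs x)
            _ ≤ δ := by linarith
        obtain ⟨x, hx0, hxfar⟩ := hP g hgE hdist
        have h1 : |f' x| < ε' := by
          by_contra hc
          push_neg at hc
          rw [hg1 x hc] at hx0
          rw [hx0] at hc
          simp at hc
          linarith
        have h2 : |(x:ℝ) - b| < δ := by
          by_contra hc
          push_neg at hc
          linarith [hKmin x hc, min_le_left ε₀ (δ/2)]
        linarith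
      have hcov' : Fan f' ε' ⊆ ⋃ k : Fin n, E (j.succAbove k) := by
        intro g hgm
        obtain ⟨i, hi⟩ := Set.mem_iUnion.mp (hcov (hsub hgm))
        have hij : i ≠ j := fun h => hdisj g hgm (h ▸ hi)
        obtain ⟨k, hk⟩ := Fin.exists_succAbove_eq hij
        exact Set.mem_iUnion.mpr ⟨k, hk ▸ hi⟩
      obtain ⟨k, g, hgk, hbad⟩ := IH (fun k => E (j.succAbove k)) f' (b-δ/2) b ε' hS'
        hε'pos (by linarith) hcov'
      exact ⟨j.succAbove k, g, hgk, hbad⟩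

noncomputable def f₀ : CI :=
  ⟨fun x => max (4*(x:ℝ) - 3) 0 + min (4*(x:ℝ) - 1) 0,
    ((((continuous_const.mul continuous_subtype_val).sub continuous_const).max
        continuous_const).add
      (((continuous_const.mul continuous_subtype_val).sub continuous_const).min
        continuous_const))⟩

lemma f₀_sys : Sys f₀ (1/4) (3/4) := by
  have happ : ∀ x : I01, f₀ x = max (4*(x:ℝ) - 3) 0 + min (4*(x:ℝ) - 1) 0 := fun x => rfl
  refine ⟨by norm_num, by norm_num, by norm_num, ?_, ?_, ?_, ?_, ?_, ?_⟩
  · intro x hx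
    rw [happ, max_eq_right (by linarith), min_eq_left (by linarith)]
    linarith
  · intro x hx1 hx2
    rw [happ, max_eq_right (by linarith), min_eq_right (by linarith)]
    norm_num
  · intro x hx
    rw [happ, max_eq_left (by linarith), min_eq_right (by linarith)]
    linarith
  · intro x
    obtain ⟨h0, h1⟩ := x.2
    rw [happ, abs_le]
    rcases le_or_gt ((x:ℝ)) (1/4) with h | h
    · rw [max_eq_right (by linarith), min_eq_left (by linarith)]
      constructor <;> linarith
    · rcases le_or_gt ((x:ℝ)) (3/4) with h2 | h2
      · rw [max_eq_right (by linarith), min_eq_right (by linarith)]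
        norm_num
      · rw [max_eq_left (by linarith), min_eq_right (by linarith)]
        constructor <;> linarith
  · rw [happ]
    norm_num
  · rw [happ]
    norm_num

end IVT



/-- The multivalued map `Intermed : f ↦ f⁻¹[0]`, defined on the continuous functions
`f : [0,1] → [-1,1]` with `f(0) = -1` and `f(1) = 1` (with the supremum metric),
is not `d`-continuous for any natural number `d`. -/
theorem intermed_not_d_continuous (d : ℕ) :
    ∀ D : Fin d → Set C(Set.Icc (0:ℝ) 1, ℝ),
      (⋃ i, D i) = {f : C(Set.Icc (0:ℝ) 1, ℝ) |
          f ⟨0, by norm_num⟩ = -1 ∧ f ⟨1, by norm_num⟩ = 1 ∧ ∀ x, |f x| ≤ 1} →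
      ∃ i, ∃ f ∈ D i,
        ¬ MVContinuousAt
            (fun f : C(Set.Icc (0:ℝ) 1, ℝ) => {x : Set.Icc (0:ℝ) 1 | f x = 0})
            (D i) f := by
  intro D hcov
  have hS0 := IVT.f₀_sys
  have hfan : IVT.Fan IVT.f₀ (1/2) ⊆ ⋃ i, D i := by
    rw [hcov]
    rintro g ⟨hg1, hg2⟩
    have h0 : g ⟨0, by norm_num⟩ = -1 := by
      rw [hg1 ⟨0, by norm_num⟩ (by rw [hS0.hf0]; norm_num)]
      exact hS0.hf0
    have h1 : g ⟨1, by norm_num⟩ = 1 := by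
      rw [hg1 ⟨1, by norm_num⟩ (by rw [hS0.hf1]; norm_num)]
      exact hS0.hf1
    refine ⟨h0, h1, ?_⟩
    intro x
    rcases le_or_gt (1/2) (|IVT.f₀ x|) with h | h
    · rw [hg1 x h]
      exact hS0.hbound x
    · have htri : |g x| ≤ |g x - IVT.f₀ x| + |IVT.f₀ x| := by
        have := abs_add_le (g x - IVT.f₀ x) (IVT.f₀ x)
        rwa [sub_add_cancel] at this
      linarith [hg2 x]
  exact IVT.main d D IVT.f₀ (1/4) (3/4) (1/2) hS0 (by norm_num) le_rfl hfan
end
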